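/- arXiv:1205.4577 — 13 statements merged into one kernel-verified Lean document; each statement's English description precedes it below -/
import Mathlib

section
/- Let k be a perfect field of characteristic p > 0, let n ≥ 1, and let R = k[x_1,…,x_n]/(x_1·x_2 ⋯ x_n) be the quotient of the polynomial ring in n variables by the principal ideal generated by the product of all the variables. Then R is Frobenius split. -/
/-- `φ : R → R` is an `e`-iterated Frobenius splitting of `R` (char `p`):
an additive map with `φ (r ^ p ^ e * x) = r * φ x` and `φ 1 = 1`. -/
def IsFrobSplitting {R : Type*} [CommRing R] (p e : ℕ) (φ : R → R) : Prop :=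
  (∀ x y : R, φ (x + y) = φ x + φ y) ∧
  (∀ r x : R, φ (r ^ p ^ e * x) = r * φ x) ∧
  φ 1 = 1

/-! The standard splitting of a polynomial ring over a perfect ring of characteristic `p`,
`c • x ^ a ↦ c ^ (1 / p) • x ^ (a / p)` when `p ∣ a` and `↦ 0` otherwise, maps every ideal
generated by squarefree monomials into itself: if `x ^ s ∣ x ^ (p • a)` with `s ≤ 1`, then
already `x ^ s ∣ x ^ a`. Hence it descends to a splitting of `k[x_1, …, x_n] / (x_1 ⋯ x_n)`. -/

theorem IsFrobSplitting.exists_quotient {R : Type*} [CommRing R] {p e : ℕ} {φ : R → R}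
    (hφ : IsFrobSplitting p e φ) (I : Ideal R) (hI : ∀ x ∈ I, φ x ∈ I) :
    ∃ ψ : R ⧸ I → R ⧸ I, IsFrobSplitting p e ψ := by
  obtain ⟨hadd, hmul, hone⟩ := hφ
  have hsub : ∀ a b, φ (a - b) = φ a - φ b := map_sub (AddMonoidHom.mk' φ hadd)
  let ψ : R ⧸ I → R ⧸ I := Quotient.map' φ fun a b hab ↦ by
    rw [Submodule.quotientRel_def, ← hsub] at *
    exact hI _ hab
  refine ⟨ψ, ?_, ?_, ?_⟩
  · rintro ⟨a⟩ ⟨b⟩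
    exact congrArg (Ideal.Quotient.mk I) (hadd a b)
  · rintro ⟨r⟩ ⟨a⟩
    exact congrArg (Ideal.Quotient.mk I) (hmul r a)
  · exact congrArg (Ideal.Quotient.mk I) hone

namespace MvPolynomial

section FrobSplitting

variable {σ k : Type*} [CommSemiring k] (p : ℕ) [ExpChar k p] [PerfectRing k p]

noncomputable def frobSplitting (f : MvPolynomial σ k) : MvPolynomial σ k :=
  AddMonoidAlgebra.ofCoeff <| Finsupp.comapDomain (p • ·)
    (Finsupp.mapRange (frobeniusEquiv k p).symm (map_zero _) (AddMonoidAlgebra.coeff f))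
    (smul_right_injective _ (expChar_pos k p).ne').injOn

theorem coeff_frobSplitting (f : MvPolynomial σ k) (a : σ →₀ ℕ) :
    coeff a (frobSplitting p f) = (frobeniusEquiv k p).symm (coeff (p • a) f) :=
  rfl

theorem frobSplitting_add (f g : MvPolynomial σ k) :
    frobSplitting p (f + g) = frobSplitting p f + frobSplitting p g := by
  ext a
  simp only [coeff_frobSplitting, coeff_add, map_add]

theorem frobSplitting_one : frobSplitting p (1 : MvPolynomial σ k) = 1 := by
  classical
  ext a
  rw [coeff_frobSplitting, coeff_one, coeff_one]
  by_cases ha : a = 0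
  · simp [ha]
  · rw [if_neg (Ne.symm ha), if_neg, map_zero]
    simpa [eq_comm, (expChar_pos k p).ne'] using ha

theorem frobSplitting_monomial_mul (b : σ →₀ ℕ) (c : k) (f : MvPolynomial σ k) :
    frobSplitting p (monomial (p • b) (c ^ p) * f) = monomial b c * frobSplitting p f := by
  have hp := expChar_pos k p
  have hle (a : σ →₀ ℕ) : p • b ≤ p • a ↔ b ≤ a := by
    simp only [Finsupp.le_def, Finsupp.smul_apply, smul_eq_mul, Nat.mul_le_mul_left_iff hp]
  have hsub (a : σ →₀ ℕ) : p • a - p • b = p • (a - b) := by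
    ext i
    simp [Nat.mul_sub]
  ext a
  simp only [coeff_frobSplitting, coeff_monomial_mul', hle]
  split_ifs
  · rw [hsub, map_mul, ← frobenius_def, ← frobeniusEquiv_apply, RingEquiv.symm_apply_apply]
  · exact map_zero _

theorem frobSplitting_pow_mul (r f : MvPolynomial σ k) :
    frobSplitting p (r ^ p * f) = r * frobSplitting p f := by
  induction r using MvPolynomial.induction_on' with
  | monomial b c => rw [monomial_pow, frobSplitting_monomial_mul]
  | add q r hq hr => rw [add_pow_expChar, add_mul, frobSplitting_add, hq, hr, add_mul]

theorem frobSplitting_mem_span_monomial_image {S : Set (σ →₀ ℕ)} (hS : ∀ s ∈ S, ∀ i, s i ≤ 1)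
    {f : MvPolynomial σ k} (hf : f ∈ Ideal.span ((fun s ↦ monomial s 1) '' S)) :
    frobSplitting p f ∈ Ideal.span ((fun s ↦ monomial s 1) '' S) := by
  rw [mem_ideal_span_monomial_image] at hf ⊢
  intro a ha
  have hpa : p • a ∈ f.support := by
    rw [mem_support_iff, coeff_frobSplitting] at ha
    exact mem_support_iff.2 fun h ↦ ha (by rw [h, map_zero])
  obtain ⟨s, hs, hsa⟩ := hf _ hpa
  refine ⟨s, hs, fun i ↦ ?_⟩
  have hsi := hS s hs i
  have hsai : s i ≤ p * a i := hsa i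
  by_cases hai : a i = 0
  · rw [hai, mul_zero] at hsai
    omega
  · omega

end FrobSplitting

theorem isFrobSplitting_frobSplitting {σ k : Type*} [CommRing k] (p : ℕ) [ExpChar k p]
    [PerfectRing k p] : IsFrobSplitting p 1 (frobSplitting p : MvPolynomial σ k → _) :=
  ⟨frobSplitting_add p, by simpa using frobSplitting_pow_mul p, frobSplitting_one p⟩

theorem prod_X_eq_monomial {σ R : Type*} [CommSemiring R] (s : Finset σ) :
    ∏ i ∈ s, (X i : MvPolynomial σ R) = monomial (∑ i ∈ s, Finsupp.single i 1) 1 :=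
  (monomial_sum_one s _).symm

end MvPolynomial

theorem Finsupp.sum_single_one_apply_le_one {σ : Type*} (s : Finset σ) (j : σ) :
    (∑ i ∈ s, Finsupp.single i 1) j ≤ 1 := by
  classical
  simp only [Finsupp.finsetSum_apply, Finsupp.single_apply, Finset.sum_ite_eq']
  split_ifs <;> simp

theorem frobSplit_of_normalCrossing_general {k : Type*} [Field k] [PerfectField k]
    (p : ℕ) [Fact p.Prime] [CharP k p] (n : ℕ) :
    ∃ φ : (MvPolynomial (Fin n) k ⧸
        Ideal.span {∏ i : Fin n, (MvPolynomial.X i : MvPolynomial (Fin n) k)}) →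
      (MvPolynomial (Fin n) k ⧸
        Ideal.span {∏ i : Fin n, (MvPolynomial.X i : MvPolynomial (Fin n) k)}),
      IsFrobSplitting p 1 φ := by
  have hspan : Ideal.span {∏ i : Fin n, (MvPolynomial.X i : MvPolynomial (Fin n) k)} =
      Ideal.span ((fun s ↦ MvPolynomial.monomial s 1) '' {∑ i, Finsupp.single i 1}) := by
    rw [Set.image_singleton, MvPolynomial.prod_X_eq_monomial]
  rw [hspan]
  refine (MvPolynomial.isFrobSplitting_frobSplitting p).exists_quotient _ fun f hf ↦ ?_
  refine MvPolynomial.frobSplitting_mem_span_monomial_image p ?_ hf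
  rintro s rfl
  exact Finsupp.sum_single_one_apply_le_one _

/-- `k[x_1,…,x_n]/(x_1 ⋯ x_n)` over a perfect field of characteristic `p > 0`
is Frobenius split. -/
theorem frobSplit_of_normalCrossing {k : Type*} [Field k] [PerfectField k]
    (p : ℕ) [Fact p.Prime] [CharP k p] (n : ℕ) (hn : 1 ≤ n) :
    ∃ φ : (MvPolynomial (Fin n) k ⧸
        Ideal.span {∏ i : Fin n, (MvPolynomial.X i : MvPolynomial (Fin n) k)}) →
      (MvPolynomial (Fin n) k ⧸
        Ideal.span {∏ i : Fin n, (MvPolynomial.X i : MvPolynomial (Fin n) k)}),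
      IsFrobSplitting p 1 φ :=
  frobSplit_of_normalCrossing_general p n
end

section
/- Let R be a commutative ring of prime characteristic p, let φ be an e-iterated Frobenius splitting of R for some e ≥ 1, and let J ⊆ R be a φ-compatible ideal. Then: (1) J is a radical ideal; and (2) the quotient R/J is Frobenius split by the induced map, i.e., there exists an e-iterated Frobenius splitting φ̄ of R/J satisfying φ̄(π(x)) = π(φ(x)) for all x ∈ R, where π : R → R/J is the quotient map. -/
namespace IsFrobSplitting

variable {R : Type*} [CommRing R] {p e : ℕ} {φ : R → R}

def toAddMonoidHom (hφ : IsFrobSplitting p e φ) : R →+ R :=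
  AddMonoidHom.mk' φ hφ.1

theorem apply_pow (hφ : IsFrobSplitting p e φ) (y : R) : φ (y ^ p ^ e) = y := by
  simpa [hφ.2.2] using hφ.2.1 y 1

section Compatible

variable {J : Ideal R} (hφ : IsFrobSplitting p e φ) (hJ : ∀ x ∈ J, φ x ∈ J)
include hφ hJ

theorem mem_of_pow_mem {x : R} (hx : x ^ p ^ e ∈ J) : x ∈ J :=
  hφ.apply_pow x ▸ hJ _ hx

theorem mem_of_pow_pow_mem {x : R} (k : ℕ) (hx : x ^ (p ^ e) ^ k ∈ J) : x ∈ J := by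
  induction k with
  | zero => simpa using hx
  | succ k ih => exact ih (hφ.mem_of_pow_mem hJ (by rwa [← pow_mul, ← pow_succ]))

theorem isRadical_of_compatible (hpe : 1 < p ^ e) : J.IsRadical := fun _ ⟨n, hn⟩ =>
  hφ.mem_of_pow_pow_mem hJ n (J.pow_mem_of_pow_mem hn (Nat.lt_pow_self hpe).le)

-- `R ⧸ J` is definitionally the quotient of the additive group of `R` by `J`.
def quotientMap : R ⧸ J →+ R ⧸ J :=
  QuotientAddGroup.lift J.toAddSubgroup
    ((Ideal.Quotient.mk J).toAddMonoidHom.comp hφ.toAddMonoidHom)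
    fun x hx => Ideal.Quotient.eq_zero_iff_mem.mpr (hJ x hx)

theorem quotientMap_mk (x : R) :
    hφ.quotientMap hJ (Ideal.Quotient.mk J x) = Ideal.Quotient.mk J (φ x) :=
  rfl

theorem quotient : IsFrobSplitting p e (hφ.quotientMap hJ) := by
  refine ⟨map_add _, fun r a => ?_, ?_⟩
  · obtain ⟨s, rfl⟩ := Ideal.Quotient.mk_surjective r
    obtain ⟨y, rfl⟩ := Ideal.Quotient.mk_surjective a
    rw [← map_pow, ← map_mul, quotientMap_mk, quotientMap_mk, hφ.2.1, map_mul]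
  · rw [← map_one (Ideal.Quotient.mk J), quotientMap_mk, hφ.2.2]

end Compatible

end IsFrobSplitting

theorem compatible_ideal_radical_and_quotient_split_general {R : Type*} [CommRing R]
    (p : ℕ) [Fact p.Prime] (e : ℕ) (he : 1 ≤ e)
    (φ : R → R) (hφ : IsFrobSplitting p e φ)
    (J : Ideal R) (hJ : ∀ x ∈ J, φ x ∈ J) :
    J.IsRadical ∧
      ∃ ψ : R ⧸ J → R ⧸ J, IsFrobSplitting p e ψ ∧
        ∀ x : R, ψ (Ideal.Quotient.mk J x) = Ideal.Quotient.mk J (φ x) := by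
  have hpe : 1 < p ^ e := Nat.one_lt_pow (by omega) (Fact.out : p.Prime).one_lt
  exact ⟨hφ.isRadical_of_compatible hJ hpe, hφ.quotientMap hJ, hφ.quotient hJ,
    hφ.quotientMap_mk hJ⟩

/-- If `J` is an ideal compatible with an `e`-iterated Frobenius splitting `φ` of `R`,
then `J` is radical and `R/J` is Frobenius split by the induced map. -/
theorem compatible_ideal_radical_and_quotient_split {R : Type*} [CommRing R]
    (p : ℕ) [Fact p.Prime] [CharP R p] (e : ℕ) (he : 1 ≤ e)
    (φ : R → R) (hφ : IsFrobSplitting p e φ)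
    (J : Ideal R) (hJ : ∀ x ∈ J, φ x ∈ J) :
    J.IsRadical ∧
      ∃ ψ : R ⧸ J → R ⧸ J, IsFrobSplitting p e ψ ∧
        ∀ x : R, ψ (Ideal.Quotient.mk J x) = Ideal.Quotient.mk J (φ x) :=
  compatible_ideal_radical_and_quotient_split_general p e he φ hφ J hJ
end

section
/- Let R be a commutative ring of prime characteristic p and let φ be an e-iterated Frobenius splitting of R for some e ≥ 1. If I and J are φ-compatible ideals of R, then I + J and I ∩ J are φ-compatible, and moreover I + J is a radical ideal. -/
/-!
Compatibility with sums only uses additivity of `φ`. For radicality, `φ (r ^ p ^ e) = r`, so a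
`φ`-compatible ideal `K` satisfies `r ^ p ^ e ∈ K → r ∈ K`; as `p ^ e > 1` this makes `K` radical.
-/

namespace IsFrobSplitting

variable {R : Type*} [CommRing R] {p e : ℕ} {φ : R → R}

theorem map_add (hφ : IsFrobSplitting p e φ) (x y : R) : φ (x + y) = φ x + φ y :=
  hφ.1 x y

theorem map_pow_pow (hφ : IsFrobSplitting p e φ) (r : R) : φ (r ^ p ^ e) = r := by
  simpa [hφ.2.2] using hφ.2.1 r 1

end IsFrobSplitting

namespace Ideal

variable {R : Type*} [CommRing R] {φ : R → R}

theorem map_mem_sup_of_map_add (hadd : ∀ x y, φ (x + y) = φ x + φ y) {I J : Ideal R}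
    (hI : ∀ x ∈ I, φ x ∈ I) (hJ : ∀ x ∈ J, φ x ∈ J) : ∀ x ∈ I ⊔ J, φ x ∈ I ⊔ J := by
  intro x hx
  obtain ⟨a, ha, b, hb, rfl⟩ := Submodule.mem_sup.1 hx
  exact Submodule.mem_sup.2 ⟨φ a, hI a ha, φ b, hJ b hb, (hadd a b).symm⟩

theorem map_mem_inf {I J : Ideal R} (hI : ∀ x ∈ I, φ x ∈ I) (hJ : ∀ x ∈ J, φ x ∈ J) :
    ∀ x ∈ I ⊓ J, φ x ∈ I ⊓ J :=
  fun x hx => ⟨hI x hx.1, hJ x hx.2⟩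

theorem isRadical_of_map_pow_eq {q : ℕ} (hq : 1 < q) (hφ : ∀ r, φ (r ^ q) = r) {K : Ideal R}
    (hK : ∀ x ∈ K, φ x ∈ K) : K.IsRadical :=
  (isRadical_iff_pow_one_lt q hq).2 fun r hr => hφ r ▸ hK _ hr

end Ideal

theorem sum_inter_compatible_and_sum_radical_general {R : Type*} [CommRing R]
    (p : ℕ) [Fact p.Prime] (e : ℕ) (he : 1 ≤ e)
    (φ : R → R) (hφ : IsFrobSplitting p e φ)
    (I J : Ideal R) (hI : ∀ x ∈ I, φ x ∈ I) (hJ : ∀ x ∈ J, φ x ∈ J) :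
    (∀ x ∈ I + J, φ x ∈ I + J) ∧ (∀ x ∈ I ⊓ J, φ x ∈ I ⊓ J) ∧ (I + J).IsRadical := by
  have hsum : ∀ x ∈ I + J, φ x ∈ I + J := Ideal.map_mem_sup_of_map_add hφ.map_add hI hJ
  have hpe : 1 < p ^ e := Nat.one_lt_pow (by omega) (Fact.out : p.Prime).one_lt
  exact ⟨hsum, Ideal.map_mem_inf hI hJ, Ideal.isRadical_of_map_pow_eq hpe hφ.map_pow_pow hsum⟩

/-- If `I` and `J` are ideals compatible with an `e`-iterated Frobenius splitting `φ`
of `R`, then `I + J` and `I ∩ J` are `φ`-compatible and `I + J` is radical. -/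
theorem sum_inter_compatible_and_sum_radical {R : Type*} [CommRing R]
    (p : ℕ) [Fact p.Prime] [CharP R p] (e : ℕ) (he : 1 ≤ e)
    (φ : R → R) (hφ : IsFrobSplitting p e φ)
    (I J : Ideal R) (hI : ∀ x ∈ I, φ x ∈ I) (hJ : ∀ x ∈ J, φ x ∈ J) :
    (∀ x ∈ I + J, φ x ∈ I + J) ∧ (∀ x ∈ I ⊓ J, φ x ∈ I ⊓ J) ∧ (I + J).IsRadical :=
  sum_inter_compatible_and_sum_radical_general p e he φ hφ I J hI hJ
end

section
/- Let R be a commutative ring of prime characteristic p and let φ be an e-iterated Frobenius splitting of R for some e ≥ 1. If J is a φ-compatible ideal of R and Q is a minimal prime over J (i.e., Q belongs to the set of primes minimal among those containing J), then Q is φ-compatible. -/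
/-- If `J` is compatible with an `e`-iterated Frobenius splitting `φ` and `Q` is a
minimal prime over `J`, then `Q` is `φ`-compatible. -/
theorem minimalPrime_compatible {R : Type*} [CommRing R]
    (p : ℕ) [Fact p.Prime] [CharP R p] (e : ℕ) (he : 1 ≤ e)
    (φ : R → R) (hφ : IsFrobSplitting p e φ)
    (J : Ideal R) (hJ : ∀ x ∈ J, φ x ∈ J)
    (Q : Ideal R) (hQ : Q ∈ J.minimalPrimes) :
    ∀ x ∈ Q, φ x ∈ Q := by
  obtain ⟨hadd, hlin, hone⟩ := hφ
  have hQp : Q.IsPrime := hQ.1.1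
  have hJQ : J ≤ Q := hQ.1.2
  have hpe : 2 ≤ p ^ e := by
    calc 2 ≤ p := (Fact.out : p.Prime).two_le
    _ = p ^ 1 := (pow_one p).symm
    _ ≤ p ^ e := Nat.pow_le_pow_right (Fact.out : p.Prime).pos he
  intro x hx
  -- Step 1: find `s ∉ Q` and `n` with `s * x ^ n ∈ J`.
  have step1 : ∃ s ∉ Q, ∃ n : ℕ, s * x ^ n ∈ J := by
    by_contra hcon
    push_neg at hcon
    set T : Submonoid R :=
      { carrier := {r | ∃ s ∉ Q, ∃ n : ℕ, s * x ^ n = r}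
        one_mem' := ⟨1, Q.primeCompl.one_mem, 0, by ring⟩
        mul_mem' := by
          rintro a b ⟨s, hs, m, rfl⟩ ⟨t, ht, n, rfl⟩
          exact ⟨s * t, fun h => ((hQp.mem_or_mem h).elim hs ht), m + n, by ring⟩ } with hT
    have hdisj : Disjoint (J : Set R) (T : Set R) := by
      rw [Set.disjoint_left]
      rintro a haJ ⟨s, hs, n, rfl⟩
      exact hcon s hs n haJ
    obtain ⟨P, hPp, hJP, hPd⟩ := Ideal.exists_le_prime_disjoint J T hdisj
    have hPQ : P ≤ Q := by
      intro y hy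
      by_contra hyQ
      exact Set.disjoint_left.mp hPd hy ⟨y, hyQ, 0, by ring⟩
    have hQP : Q ≤ P := hQ.2 ⟨hPp, hJP⟩ hPQ
    exact Set.disjoint_left.mp hPd (hQP hx) ⟨1, Q.primeCompl.one_mem, 1, by ring⟩
  obtain ⟨s, hs, n, hsn⟩ := step1
  -- Step 2: descend on `n` to reach `s * x ∈ J`, then conclude.
  clear hx
  induction n using Nat.strong_induction_on generalizing s with
  | _ n ih =>
    match n, hsn with
    | 0, hsn =>
      exact absurd (hJQ (by simpa using hsn)) hs
    | 1, hsn =>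
      have h1 : s ^ p ^ e * x ∈ J := by
        have : s ^ p ^ e * x = s ^ (p ^ e - 1) * (s * x ^ 1) := by
          rw [pow_one]
          rw [show s ^ p ^ e = s ^ (p ^ e - 1) * s by
            rw [← pow_succ, Nat.sub_add_cancel (by omega)]]
          ring
        rw [this]
        exact J.mul_mem_left _ hsn
      have h2 : s * φ x ∈ Q := hJQ (by simpa [hlin s x] using hJ _ h1)
      exact (hQp.mem_or_mem h2).resolve_left hs
    | (m + 2), hsn =>
      -- show `s * x ^ (m + 1) ∈ J` and apply the induction hypothesis
      have key : (s * x ^ (m + 1)) ^ p ^ e ∈ J := by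
        have hle : m + 2 ≤ (m + 1) * p ^ e := by nlinarith
        have : (s * x ^ (m + 1)) ^ p ^ e
            = s ^ (p ^ e - 1) * x ^ ((m + 1) * p ^ e - (m + 2)) * (s * x ^ (m + 2)) := by
          rw [mul_pow, ← pow_mul]
          rw [show s ^ p ^ e = s ^ (p ^ e - 1) * s by
            rw [← pow_succ, Nat.sub_add_cancel (by omega)]]
          rw [show x ^ ((m + 1) * p ^ e)
              = x ^ ((m + 1) * p ^ e - (m + 2)) * x ^ (m + 2) by
            rw [← pow_add, Nat.sub_add_cancel hle]]
          ring
        rw [this]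
        exact J.mul_mem_left _ hsn
      have hmem : s * x ^ (m + 1) ∈ J := by
        have := hJ _ key
        rwa [show φ ((s * x ^ (m + 1)) ^ p ^ e)
            = s * x ^ (m + 1) by
          have h := hlin (s * x ^ (m + 1)) 1
          rw [mul_one, hone, mul_one] at h
          exact h] at this
      exact ih (m + 1) (by omega) s hs hmem
end

section
/- Let A and B be commutative rings of prime characteristic p, let f : A → B be a ring homomorphism, and suppose there is an additive map α : B → A with α(f(a)·b) = a·α(b) for all a ∈ A, b ∈ B and α(1) = 1 (i.e., f splits as a map of A-modules). If B admits an e-iterated Frobenius splitting (e ≥ 1), then A admits an e-iterated Frobenius splitting; in particular, if B is Frobenius split then A is Frobenius split. -/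
/-- If `f : A → B` splits as a map of `A`-modules and `B` admits an `e`-iterated
Frobenius splitting, then so does `A`. -/
theorem frobSplit_of_split_hom {A B : Type*} [CommRing A] [CommRing B]
    (p : ℕ) [Fact p.Prime] [CharP A p] [CharP B p]
    (f : A →+* B) (α : B → A)
    (hadd : ∀ x y : B, α (x + y) = α x + α y)
    (hlinear : ∀ (a : A) (b : B), α (f a * b) = a * α b)
    (hone : α 1 = 1)
    (e : ℕ) (he : 1 ≤ e) (φ : B → B) (hφ : IsFrobSplitting p e φ) :
    ∃ ψ : A → A, IsFrobSplitting p e ψ := by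
  obtain ⟨hφadd, hφlin, hφone⟩ := hφ
  refine ⟨fun a => α (φ (f a)), ?_, ?_, ?_⟩
  · intro x y; show α (φ (f (x+y))) = _; rw [map_add, hφadd, hadd]
  · intro r x; show α (φ (f (r ^ p ^ e * x))) = _; rw [map_mul, map_pow, hφlin, hlinear]
  · show α (φ (f 1)) = 1; rw [map_one, hφone, hone]
end

section
/- Let R be a Noetherian commutative ring of prime characteristic p, let e ≥ 1, let φ : R → R be a p^{-e}-linear map, and let J ⊆ R be an ideal. Denote by φ^n the n-fold composite of φ (a p^{-ne}-linear map). Then: (1) if J is φ-compatible, then J is φ^n-compatible for every n ≥ 1; and (2) conversely, if φ is surjective and J is φ^n-compatible for some n ≥ 1, then J is φ-compatible. -/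
/-- If `J` is compatible with a `p^{-e}`-linear map `φ` on a Noetherian ring `R`, then
`J` is compatible with each iterate `φ^[n]`; conversely, if `φ` is surjective and `J`
is compatible with `φ^[n]` for some `n ≥ 1`, then `J` is `φ`-compatible. -/
theorem compatible_iterate {R : Type*} [CommRing R] [IsNoetherianRing R]
    (p : ℕ) [Fact p.Prime] [CharP R p] (e : ℕ) (he : 1 ≤ e)
    (φ : R → R)
    (hadd : ∀ x y : R, φ (x + y) = φ x + φ y)
    (hlin : ∀ r x : R, φ (r ^ p ^ e * x) = r * φ x)
    (J : Ideal R) :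
    ((∀ x ∈ J, φ x ∈ J) → ∀ n, 1 ≤ n → ∀ x ∈ J, φ^[n] x ∈ J) ∧
    (Function.Surjective φ →
      ∀ n, 1 ≤ n → (∀ x ∈ J, φ^[n] x ∈ J) → ∀ x ∈ J, φ x ∈ J) := by
  constructor
  · intro hJ n hn
    clear hn
    induction n with
    | zero => intro x hx; simpa using hx
    | succ k ih =>
      intro x hx
      rw [Function.iterate_succ_apply']
      exact hJ _ (ih x hx)
  · intro hsurj n hn hJn x hx
    -- pick u with φ u = 1
    obtain ⟨u, hu⟩ := hsurj 1
    -- every element z of J is φ of an element of J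
    have key : ∀ z ∈ J, ∃ w ∈ J, φ w = z := by
      intro z hz
      refine ⟨z ^ p ^ e * u, J.mul_mem_right u (Ideal.pow_mem_of_mem J hz _ (pow_pos (Nat.Prime.pos Fact.out) e)),
        ?_⟩
      rw [hlin, hu, mul_one]
    -- hence every element of J is φ^[k] of an element of J
    have key2 : ∀ k, ∀ z ∈ J, ∃ w ∈ J, φ^[k] w = z := by
      intro k
      induction k with
      | zero => intro z hz; exact ⟨z, hz, rfl⟩
      | succ m ih =>
        intro z hz
        obtain ⟨w, hw, hwz⟩ := key z hz
        obtain ⟨v, hv, hvw⟩ := ih w hw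
        exact ⟨v, hv, by rw [Function.iterate_succ_apply', hvw, hwz]⟩
    obtain ⟨w, hw, hwx⟩ := key2 (n - 1) x hx
    have : φ x = φ^[n] w := by
      rw [← hwx, ← Function.iterate_succ_apply' φ (n-1) w]
      congr 1
      omega
    rw [this]
    exact hJn w hw
end

section
/- Let k be a perfect field of characteristic p, let S = k[x_1,…,x_n] be the polynomial ring, let e ≥ 1, and let I and J be ideals of S. Then J ⊆ I^{[p^e]} if and only if for every p^{-e}-linear map φ : S → S and every x ∈ J one has φ(x) ∈ I. -/
/-!
Let `q = p ^ e`. Every `f ∈ k[x]` is `∑ α, expand q (f_α) * x ^ α`, summed over the exponents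
with all `α i < q`, where `f_α` collects the coefficients of `f` at the exponents `q • m + α`;
moreover `(expand q g * f)_α = g * f_α`. Since `k` is perfect, `expand q h` is the `q`-th power of
`h` with its coefficients replaced by their `q`-th roots. Taking these roots in `f_α` therefore
gives `p^{-e}`-linear maps `φ_α` with `f = ∑ α, (φ_α f) ^ q * x ^ α`, so `f ∈ I^{[q]}` once all
`φ_α f ∈ I`. Conversely, a `p^{-e}`-linear `φ` sends `r * a ^ q` to `a * φ r`, hence `I^{[q]}`
into `I`.
-/

/-- The `q`-th Frobenius power `I^{[q]}` of an ideal: the ideal generated by the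
`q`-th powers of the elements of `I`. -/
def frobeniusPower {S : Type*} [CommSemiring S] (I : Ideal S) (q : ℕ) : Ideal S :=
  Ideal.span ((fun a => a ^ q) '' (I : Set S))

theorem map_mem_of_mem_frobeniusPower {S : Type*} [CommSemiring S] {I : Ideal S} {q : ℕ}
    {φ : S → S} (hadd : ∀ x y, φ (x + y) = φ x + φ y)
    (hlin : ∀ r x, φ (r ^ q * x) = r * φ x) {x : S} (hx : x ∈ frobeniusPower I q) :
    φ x ∈ I := by
  suffices ∀ r, φ (r * x) ∈ I by simpa using this 1
  induction hx using Submodule.span_induction with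
  | mem _ hy =>
    obtain ⟨a, ha, rfl⟩ := hy
    intro r
    rw [mul_comm, hlin]
    exact I.mul_mem_right _ ha
  | zero =>
    have hφ0 : φ 0 = 0 := by simpa using hlin 0 0
    intro r
    rw [mul_zero, hφ0]
    exact I.zero_mem
  | add _ _ _ _ hy hz =>
    intro r
    rw [mul_add, hadd]
    exact I.add_mem (hy r) (hz r)
  | smul a _ _ hy =>
    intro r
    rw [smul_eq_mul, ← mul_assoc]
    exact hy (r * a)

namespace Finsupp

variable {σ : Type*} {q : ℕ} {α s m : σ →₀ ℕ}

theorem smul_add_injective (hq : q ≠ 0) (α : σ →₀ ℕ) :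
    Function.Injective fun m : σ →₀ ℕ => q • m + α :=
  fun _ _ h => nsmul_right_injective hq (add_right_cancel h)

theorem smul_le_smul_add_iff (hα : ∀ i, α i < q) : q • s ≤ q • m + α ↔ s ≤ m := by
  simp only [le_def, coe_add, coe_smul, Pi.add_apply, Pi.smul_apply, smul_eq_mul]
  refine forall_congr' fun i => ⟨fun h => ?_, fun h => ?_⟩
  · by_contra! hc
    nlinarith [hα i]
  · nlinarith

theorem smul_add_tsub_smul (h : s ≤ m) : q • m + α - q • s = q • (m - s) + α := by
  ext i
  have := Nat.mul_le_mul_left q (h i)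
  simp only [coe_tsub, coe_add, coe_smul, Pi.sub_apply, Pi.add_apply, Pi.smul_apply,
    smul_eq_mul, Nat.mul_sub]
  omega

theorem mapRange_mod_lt (hq : q ≠ 0) (d : σ →₀ ℕ) (i : σ) :
    d.mapRange (· % q) (Nat.zero_mod q) i < q :=
  Nat.mod_lt _ (Nat.pos_of_ne_zero hq)

theorem smul_mapRange_div_add_mapRange_mod (q : ℕ) (d : σ →₀ ℕ) :
    q • d.mapRange (· / q) (Nat.zero_div q) + d.mapRange (· % q) (Nat.zero_mod q) = d := by
  ext i
  simp [Nat.div_add_mod]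

end Finsupp

namespace MvPolynomial

variable {σ R : Type*} [CommSemiring R] (q : ℕ) [NeZero q]

noncomputable def contract (α : σ →₀ ℕ) : MvPolynomial σ R →+ MvPolynomial σ R :=
  AddMonoidAlgebra.coeffAddEquiv.symm.toAddMonoidHom.comp <|
    (Finsupp.comapDomain.addMonoidHom (Finsupp.smul_add_injective (NeZero.ne q) α)).comp
      AddMonoidAlgebra.coeffAddEquiv.toAddMonoidHom

theorem coeff_contract (α m : σ →₀ ℕ) (f : MvPolynomial σ R) :
    coeff m (contract q α f) = coeff (q • m + α) f := rfl

variable {q} {α : σ →₀ ℕ}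

theorem contract_expand_mul (hα : ∀ i, α i < q) (g f : MvPolynomial σ R) :
    contract q α (expand q g * f) = g * contract q α f := by
  induction g using MvPolynomial.induction_on' with
  | monomial s c =>
    ext m
    simp only [expand_monomial, coeff_contract, coeff_monomial_mul',
      Finsupp.smul_le_smul_add_iff hα]
    split_ifs with hsm
    · rw [Finsupp.smul_add_tsub_smul hsm]
    · rfl
  | add g₁ g₂ h₁ h₂ => rw [map_add, add_mul, map_add, h₁, h₂, add_mul]

theorem coeff_expand_mul_monomial [DecidableEq σ] (hα : ∀ i, α i < q) {β : σ →₀ ℕ}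
    (hβ : ∀ i, β i < q) (g : MvPolynomial σ R) (m : σ →₀ ℕ) :
    coeff (q • m + α) (expand q g * monomial β 1) = if β = α then coeff m g else 0 := by
  rw [coeff_mul_monomial', mul_one]
  split_ifs with hle hβα hβα
  · subst hβα
    rw [add_tsub_cancel_right, coeff_expand_smul _ (NeZero.ne q)]
  · obtain ⟨i, hi⟩ : ∃ i, β i ≠ α i := by
      by_contra! h
      exact hβα (Finsupp.ext h)
    refine coeff_expand_of_not_dvd _ (i := i) fun ⟨c, hc⟩ => hi ?_
    have hc' : q * m i + α i = q * c + β i := by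
      have := hle i
      simp only [Finsupp.coe_tsub, Finsupp.coe_add, Finsupp.coe_smul, Pi.sub_apply,
        Pi.add_apply, Pi.smul_apply, smul_eq_mul] at hc this ⊢
      omega
    have := congrArg (· % q) hc'
    simpa [Nat.mul_add_mod, Nat.mod_eq_of_lt (hα i), Nat.mod_eq_of_lt (hβ i)] using this.symm
  · exact absurd (hβα ▸ le_add_self) hle
  · rfl

theorem sum_expand_contract_mul_monomial [DecidableEq σ] (f : MvPolynomial σ R) :
    ∑ α ∈ f.support.image (·.mapRange (· % q) (Nat.zero_mod q)),
      expand q (contract q α f) * monomial α 1 = f := by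
  set residues := f.support.image (·.mapRange (· % q) (Nat.zero_mod q))
  have reduced : ∀ α ∈ residues, ∀ i, α i < q := by
    simp only [residues, Finset.mem_image]
    rintro _ ⟨d, -, rfl⟩
    exact Finsupp.mapRange_mod_lt (NeZero.ne q) d
  ext d
  have hd := Finsupp.smul_mapRange_div_add_mapRange_mod q d
  conv_lhs => rw [← hd]
  rw [coeff_sum, Finset.sum_congr rfl fun β hβ =>
    coeff_expand_mul_monomial (Finsupp.mapRange_mod_lt (NeZero.ne q) d) (reduced β hβ) _ _,
    Finset.sum_ite_eq' residues]
  split_ifs with hmem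
  · rw [coeff_contract, hd]
  · refine (notMem_support_iff.mp fun hd' => hmem ?_).symm
    exact Finset.mem_image_of_mem _ hd'

section PerfectRing

variable {σ k : Type*} [CommSemiring k] (p : ℕ) [ExpChar k p] (e : ℕ)

theorem pow_eq_expand_map_iterateFrobenius (r : MvPolynomial σ k) :
    r ^ p ^ e = expand (p ^ e) (map (iterateFrobenius k p e) r) := by
  rw [← map_expand, map_iterateFrobenius_expand]

variable [PerfectRing k p]

theorem iterateFrobenius_comp_iterateFrobeniusEquiv_symm :
    (iterateFrobenius k p e).comp (iterateFrobeniusEquiv k p e).symm = RingHom.id k :=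
  RingHom.ext (iterateFrobeniusEquiv k p e).apply_symm_apply

theorem iterateFrobeniusEquiv_symm_comp_iterateFrobenius :
    ((iterateFrobeniusEquiv k p e).symm : k →+* k).comp (iterateFrobenius k p e) = RingHom.id k :=
  RingHom.ext (iterateFrobeniusEquiv k p e).symm_apply_apply

theorem expand_eq_pow_map_symm (g : MvPolynomial σ k) :
    expand (p ^ e) g = map (iterateFrobeniusEquiv k p e).symm g ^ p ^ e := by
  rw [pow_eq_expand_map_iterateFrobenius, map_map,
    iterateFrobenius_comp_iterateFrobeniusEquiv_symm, map_id]

variable [NeZero p]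

theorem map_symm_contract_pow_mul {α : σ →₀ ℕ} (hα : ∀ i, α i < p ^ e)
    (r f : MvPolynomial σ k) :
    map (iterateFrobeniusEquiv k p e).symm (contract (p ^ e) α (r ^ p ^ e * f)) =
      r * map (iterateFrobeniusEquiv k p e).symm (contract (p ^ e) α f) := by
  rw [pow_eq_expand_map_iterateFrobenius, contract_expand_mul hα, map_mul, map_map,
    iterateFrobeniusEquiv_symm_comp_iterateFrobenius, map_id]

end PerfectRing

end MvPolynomial

open MvPolynomial in
theorem mem_frobeniusPower_of_forall_map_mem {σ k : Type*} [CommSemiring k] (p : ℕ)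
    [ExpChar k p] [PerfectRing k p] [NeZero p] (e : ℕ) {I : Ideal (MvPolynomial σ k)}
    {f : MvPolynomial σ k}
    (h : ∀ φ : MvPolynomial σ k → MvPolynomial σ k, (∀ x y, φ (x + y) = φ x + φ y) →
      (∀ r x, φ (r ^ p ^ e * x) = r * φ x) → φ f ∈ I) :
    f ∈ frobeniusPower I (p ^ e) := by
  classical
  rw [← sum_expand_contract_mul_monomial (q := p ^ e) f]
  refine Ideal.sum_mem _ fun α hα => ?_
  obtain ⟨d, -, rfl⟩ := Finset.mem_image.mp hα
  have hd := Finsupp.mapRange_mod_lt (NeZero.ne (p ^ e)) d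
  rw [expand_eq_pow_map_symm]
  refine Ideal.mul_mem_right _ _ (Ideal.subset_span ⟨_, h (fun g => map _ (contract _ _ g))
    (fun _ _ => by rw [map_add, map_add]) (map_symm_contract_pow_mul p e hd), rfl⟩)

theorem subset_frobeniusPower_iff_general {k : Type*} [Field k] [PerfectField k]
    (p : ℕ) [Fact p.Prime] [CharP k p] (n e : ℕ)
    (I J : Ideal (MvPolynomial (Fin n) k)) :
    J ≤ frobeniusPower I (p ^ e) ↔
      ∀ φ : MvPolynomial (Fin n) k → MvPolynomial (Fin n) k,
        (∀ x y, φ (x + y) = φ x + φ y) →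
        (∀ r x, φ (r ^ p ^ e * x) = r * φ x) →
        ∀ x ∈ J, φ x ∈ I :=
  ⟨fun hJ _ hadd hlin _ hx => map_mem_of_mem_frobeniusPower hadd hlin (hJ hx),
    fun h _ hx => mem_frobeniusPower_of_forall_map_mem p e fun φ hadd hlin => h φ hadd hlin _ hx⟩

/-- For ideals `I`, `J` of `S = k[x_1,…,x_n]` over a perfect field `k` of
characteristic `p`, one has `J ⊆ I^{[p^e]}` iff `φ(J) ⊆ I` for every
`p^{-e}`-linear map `φ : S → S`. -/
theorem subset_frobeniusPower_iff {k : Type*} [Field k] [PerfectField k]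
    (p : ℕ) [Fact p.Prime] [CharP k p] (n e : ℕ) (he : 1 ≤ e)
    (I J : Ideal (MvPolynomial (Fin n) k)) :
    J ≤ frobeniusPower I (p ^ e) ↔
      ∀ φ : MvPolynomial (Fin n) k → MvPolynomial (Fin n) k,
        (∀ x y, φ (x + y) = φ x + φ y) →
        (∀ r x, φ (r ^ p ^ e * x) = r * φ x) →
        ∀ x ∈ J, φ x ∈ I :=
  subset_frobeniusPower_iff_general p n e I J
end

section
/- Fedder's Lemma. Let k be a perfect field of characteristic p, let S = k[x_1,…,x_n] be the polynomial ring, let e ≥ 1, let I be an ideal of S, and let q be a prime ideal of S containing I. Write R = S/I and let π : S → R be the quotient map. Then the following are equivalent: (i) there exists a p^{-e}-linear map φ : R → R (an additive map with φ(y^{p^e}·z) = y·φ(z) for all y, z ∈ R) whose image is not contained in the prime ideal π(q) of R; (ii) the colon ideal (I^{[p^e]} : I) is not contained in q^{[p^e]}. -/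
/-!
Write `Q = p^e`. Since `k` is perfect, `S = k[x]` is free over `S^Q` on the monomials `x^a` with
`0 ≤ a_i < Q`, and the coordinate `T` at the top monomial `x^{(Q-1,…,Q-1)}` is `p^{-e}`-linear
with `f ∈ J^{[Q]} ↔ ∀ g, T (f g) ∈ J` for every ideal `J`. Hence `f ↦ T (s f)` induces a map on
`S/I` when `s ∈ (I^{[Q]} : I)`, every `p^{-e}`-linear map on `S/I` arises this way from such an
`s`, and the image of the induced map lies in `π(q)` exactly when `s ∈ q^{[Q]}`.
-/

namespace Nat

theorem mul_le_mul_add_iff {Q u b a : ℕ} (ha : a < Q) : Q * u ≤ Q * b + a ↔ u ≤ b := by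
  refine ⟨fun h => ?_, fun h => (Nat.mul_le_mul_left Q h).trans (Nat.le_add_right _ _)⟩
  by_contra! hbu
  have := Nat.mul_le_mul_left Q hbu
  rw [Nat.mul_succ] at this
  omega

end Nat

namespace Finsupp

variable {σ : Type*} {Q : ℕ} {a b u : σ →₀ ℕ}

theorem smul_add_injective_s10 (hQ : Q ≠ 0) (a : σ →₀ ℕ) :
    Function.Injective fun b : σ →₀ ℕ => Q • b + a :=
  (add_left_injective a).comp (smul_right_injective _ hQ)

theorem smul_le_smul_add_iff_s10 (ha : ∀ i, a i < Q) : Q • u ≤ Q • b + a ↔ u ≤ b := by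
  simp only [Finsupp.le_def, Finsupp.add_apply, Finsupp.smul_apply, smul_eq_mul,
    Nat.mul_le_mul_add_iff (ha _)]

theorem smul_add_tsub_smul_s10 (hub : u ≤ b) : Q • b + a - Q • u = Q • (b - u) + a := by
  ext i
  have := Nat.mul_le_mul_left Q (hub i)
  simp only [Finsupp.tsub_apply, Finsupp.add_apply, Finsupp.smul_apply, smul_eq_mul, Nat.mul_sub]
  omega

theorem eq_smul_add_iff {r : σ →₀ ℕ} (hr : ∀ i, r i < Q) : r = Q • b + a ↔ b = 0 ∧ r = a := by
  refine ⟨fun h => ?_, fun ⟨hb, hra⟩ => by rw [hb, smul_zero, zero_add, hra]⟩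
  have hb : b = 0 := by
    ext i
    have hri := hr i
    rw [h, Finsupp.add_apply, Finsupp.smul_apply, smul_eq_mul] at hri
    by_contra! hbi
    have := Nat.mul_le_mul_left Q (Nat.one_le_iff_ne_zero.2 hbi)
    omega
  rw [h, hb, smul_zero, zero_add]
  exact ⟨rfl, rfl⟩

theorem exists_eq_smul_add (hQ : 0 < Q) (m : σ →₀ ℕ) :
    ∃ d r : σ →₀ ℕ, (∀ i, r i < Q) ∧ m = Q • d + r := by
  refine ⟨m.mapRange (· / Q) (Nat.zero_div Q), m.mapRange (· % Q) (Nat.zero_mod Q),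
    fun i => Nat.mod_lt _ hQ, ?_⟩
  ext i
  simp [Nat.div_add_mod]

variable (σ) in
noncomputable def digitMax [Finite σ] (Q : ℕ) : σ →₀ ℕ :=
  equivFunOnFinite.symm fun _ => Q - 1

theorem le_digitMax_iff [Finite σ] (hQ : 0 < Q) : a ≤ digitMax σ Q ↔ ∀ i, a i < Q := by
  simp only [Finsupp.le_def, digitMax, coe_equivFunOnFinite_symm]
  exact forall_congr' fun i => by omega

end Finsupp

theorem iterateFrobeniusEquiv_symm_pow_mul {k : Type*} [CommSemiring k] (p : ℕ) [ExpChar k p]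
    [PerfectRing k p] (e : ℕ) (c x : k) :
    (iterateFrobeniusEquiv k p e).symm (c ^ p ^ e * x) =
      c * (iterateFrobeniusEquiv k p e).symm x := by
  rw [map_mul, ← iterateFrobeniusEquiv_def, RingEquiv.symm_apply_apply]

namespace MvPolynomial

section CommSemiring

variable {k : Type*} [CommSemiring k] (p : ℕ) [ExpChar k p] [PerfectRing k p] (e : ℕ) {σ : Type*}

/-- The coordinate of `f` at `x^a` over `k[x]^{p^e}` when all `a i < p^e`: its coefficient at
`x^b` is the `p^e`-th root of the coefficient of `f` at `x^{p^e b + a}`. -/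
noncomputable def frobeniusDigit (a : σ →₀ ℕ) : MvPolynomial σ k →+ MvPolynomial σ k :=
  AddMonoidAlgebra.coeffAddEquiv.symm.toAddMonoidHom.comp <|
    (Finsupp.mapRange.addMonoidHom (iterateFrobeniusEquiv k p e).symm.toAddMonoidHom).comp <|
      (Finsupp.comapDomain.addMonoidHom
        (Finsupp.smul_add_injective_s10 (expChar_pow_pos k p e).ne' a)).comp
          AddMonoidAlgebra.coeffAddEquiv.toAddMonoidHom

theorem coeff_frobeniusDigit (a b : σ →₀ ℕ) (f : MvPolynomial σ k) :
    coeff b (frobeniusDigit p e a f) =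
      (iterateFrobeniusEquiv k p e).symm (coeff (p ^ e • b + a) f) :=
  rfl

theorem frobeniusDigit_pow_mul {a : σ →₀ ℕ} (ha : ∀ i, a i < p ^ e) (g f : MvPolynomial σ k) :
    frobeniusDigit p e a (g ^ p ^ e * f) = g * frobeniusDigit p e a f := by
  induction g using MvPolynomial.induction_on' with
  | monomial u c =>
    ext b
    rw [monomial_pow, coeff_frobeniusDigit, coeff_monomial_mul', coeff_monomial_mul']
    simp only [Finsupp.smul_le_smul_add_iff_s10 ha]
    split_ifs with hub
    · rw [Finsupp.smul_add_tsub_smul_s10 hub, coeff_frobeniusDigit,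
        iterateFrobeniusEquiv_symm_pow_mul]
    · exact map_zero _
  | add g₁ g₂ h₁ h₂ => rw [add_pow_expChar_pow, add_mul, map_add, h₁, h₂, add_mul]

theorem frobeniusDigit_monomial_one [DecidableEq σ] {a r : σ →₀ ℕ} (hr : ∀ i, r i < p ^ e) :
    frobeniusDigit p e a (monomial r (1 : k)) = if r = a then 1 else 0 := by
  ext b
  rw [coeff_frobeniusDigit, coeff_monomial]
  simp only [Finsupp.eq_smul_add_iff hr]
  by_cases hra : r = a
  · simp [hra, coeff_one, eq_comm]
  · simp [hra]

theorem sum_frobeniusDigit_pow_mul_monomial [Finite σ] [DecidableEq σ] (f : MvPolynomial σ k) :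
    ∑ a ∈ Finset.Iic (Finsupp.digitMax σ (p ^ e)), frobeniusDigit p e a f ^ p ^ e * monomial a 1
      = f := by
  have hQ := expChar_pow_pos k p e
  induction f using MvPolynomial.induction_on' with
  | monomial m c =>
    obtain ⟨d, r, hr, rfl⟩ := Finsupp.exists_eq_smul_add hQ m
    have hmon : monomial (p ^ e • d + r) c =
        monomial d ((iterateFrobeniusEquiv k p e).symm c) ^ p ^ e * monomial r 1 := by
      rw [monomial_pow, monomial_mul, mul_one, ← iterateFrobeniusEquiv_def,
        RingEquiv.apply_symm_apply]
    rw [hmon, Finset.sum_eq_single r]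
    · rw [frobeniusDigit_pow_mul p e hr, frobeniusDigit_monomial_one p e hr, if_pos rfl, mul_one]
    · intro a ha har
      rw [frobeniusDigit_pow_mul p e ((Finsupp.le_digitMax_iff hQ).1 (Finset.mem_Iic.1 ha)),
        frobeniusDigit_monomial_one p e hr, if_neg (Ne.symm har), mul_zero, zero_pow hQ.ne',
        zero_mul]
    · exact fun hr' => absurd (Finset.mem_Iic.2 ((Finsupp.le_digitMax_iff hQ).2 hr)) hr'
  | add f g hf hg =>
    simp only [map_add, add_pow_expChar_pow, add_mul, Finset.sum_add_distrib, hf, hg]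

noncomputable def frobeniusTrace [Finite σ] : MvPolynomial σ k →+ MvPolynomial σ k :=
  frobeniusDigit p e (Finsupp.digitMax σ (p ^ e))

theorem frobeniusDigit_eq_frobeniusTrace [Finite σ] {a : σ →₀ ℕ}
    (ha : a ≤ Finsupp.digitMax σ (p ^ e)) (f : MvPolynomial σ k) :
    frobeniusDigit p e a f =
      frobeniusTrace p e (monomial (Finsupp.digitMax σ (p ^ e) - a) 1 * f) := by
  ext b
  rw [frobeniusTrace, coeff_frobeniusDigit, coeff_frobeniusDigit, coeff_monomial_mul',
    if_pos (le_add_left tsub_le_self), one_mul, add_tsub_assoc_of_le tsub_le_self,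
    tsub_tsub_cancel_of_le ha]

theorem frobeniusTrace_pow_mul [Finite σ] (g f : MvPolynomial σ k) :
    frobeniusTrace p e (g ^ p ^ e * f) = g * frobeniusTrace p e f :=
  frobeniusDigit_pow_mul p e
    ((Finsupp.le_digitMax_iff (expChar_pow_pos k p e)).1 le_rfl) g f

theorem mem_frobeniusPower_iff [Finite σ] {J : Ideal (MvPolynomial σ k)} {f : MvPolynomial σ k} :
    f ∈ frobeniusPower J (p ^ e) ↔ ∀ g, frobeniusTrace p e (f * g) ∈ J := by
  classical
  constructor
  · intro hf
    induction hf using Submodule.span_induction with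
    | mem _ h =>
      obtain ⟨h, hJ, rfl⟩ := h
      exact fun g => frobeniusTrace_pow_mul p e h g ▸ J.mul_mem_right _ hJ
    | zero => simp
    | add x y _ _ hx hy => exact fun g => by rw [add_mul, map_add]; exact J.add_mem (hx g) (hy g)
    | smul c x _ hx => exact fun g => by rw [smul_eq_mul, mul_comm c, mul_assoc]; exact hx _
  · intro hf
    rw [← sum_frobeniusDigit_pow_mul_monomial p e f]
    refine Ideal.sum_mem _ fun a ha => Ideal.mul_mem_right _ _ (Ideal.subset_span ⟨_, ?_, rfl⟩)
    rw [frobeniusDigit_eq_frobeniusTrace p e (Finset.mem_Iic.1 ha), mul_comm]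
    exact hf _

end CommSemiring

section Quotient

variable {k : Type*} [CommRing k] (p : ℕ) [ExpChar k p] [PerfectRing k p] (e : ℕ)
  {σ : Type*} [Finite σ] {I : Ideal (MvPolynomial σ k)} {s : MvPolynomial σ k}

theorem exists_frobeniusTrace_mul_eq (φ : MvPolynomial σ k ⧸ I →+ MvPolynomial σ k ⧸ I)
    (hφ : ∀ y z, φ (y ^ p ^ e * z) = y * φ z) :
    ∃ s, ∀ f, Ideal.Quotient.mk I (frobeniusTrace p e (s * f)) = φ (Ideal.Quotient.mk I f) := by
  classical
  set δ := Finsupp.digitMax σ (p ^ e)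
  choose t ht using fun a => Ideal.Quotient.mk_surjective (φ (Ideal.Quotient.mk I (monomial a 1)))
  refine ⟨∑ a ∈ Finset.Iic δ, t a ^ p ^ e * monomial (δ - a) 1, fun f => ?_⟩
  have hQ := expChar_pow_pos k p e
  have trace_mul_monomial : ∀ b ∈ Finset.Iic δ,
      frobeniusTrace p e ((∑ a ∈ Finset.Iic δ, t a ^ p ^ e * monomial (δ - a) 1) * monomial b 1)
        = t b := by
    intro b hb
    have hb' := (Finsupp.le_digitMax_iff hQ).1 (Finset.mem_Iic.1 hb)
    simp only [Finset.sum_mul, map_sum, mul_assoc, frobeniusTrace_pow_mul]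
    rw [Finset.sum_eq_single b]
    · rw [← frobeniusDigit_eq_frobeniusTrace p e (Finset.mem_Iic.1 hb),
        frobeniusDigit_monomial_one p e hb', if_pos rfl, mul_one]
    · intro a ha hab
      rw [← frobeniusDigit_eq_frobeniusTrace p e (Finset.mem_Iic.1 ha),
        frobeniusDigit_monomial_one p e hb', if_neg (Ne.symm hab), mul_zero]
    · exact fun h => absurd hb h
  conv_lhs => rw [← sum_frobeniusDigit_pow_mul_monomial p e f]
  conv_rhs => rw [← sum_frobeniusDigit_pow_mul_monomial p e f]
  simp only [Finset.mul_sum, map_sum, mul_left_comm _ (_ ^ p ^ e), frobeniusTrace_pow_mul]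
  refine Finset.sum_congr rfl fun a ha => ?_
  rw [trace_mul_monomial a ha, map_mul, map_mul, map_pow, hφ, ht]

theorem frobeniusTrace_mul_mem_of_mem_colon (hs : s ∈ (frobeniusPower I (p ^ e)).colon I)
    {f : MvPolynomial σ k} (hf : f ∈ I) : frobeniusTrace p e (s * f) ∈ I := by
  simpa using (mem_frobeniusPower_iff p e).1 (Submodule.mem_colon.1 hs f hf) 1

noncomputable def quotientFrobeniusTraceMul (s : MvPolynomial σ k)
    (hs : s ∈ (frobeniusPower I (p ^ e)).colon I) :
    MvPolynomial σ k ⧸ I →+ MvPolynomial σ k ⧸ I :=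
  QuotientAddGroup.lift I.toAddSubgroup
    ((Ideal.Quotient.mk I).toAddMonoidHom.comp
      ((frobeniusTrace p e).comp (AddMonoidHom.mulLeft s)))
    fun f hf => by
      simpa [Ideal.Quotient.eq_zero_iff_mem] using frobeniusTrace_mul_mem_of_mem_colon p e hs hf

theorem quotientFrobeniusTraceMul_mk (hs : s ∈ (frobeniusPower I (p ^ e)).colon I)
    (f : MvPolynomial σ k) :
    quotientFrobeniusTraceMul p e s hs (Ideal.Quotient.mk I f) =
      Ideal.Quotient.mk I (frobeniusTrace p e (s * f)) :=
  rfl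

end Quotient

end MvPolynomial

open MvPolynomial in
theorem fedders_lemma_general {k : Type*} [Field k] [PerfectField k]
    (p : ℕ) [Fact p.Prime] [CharP k p] (n e : ℕ)
    (I q : Ideal (MvPolynomial (Fin n) k)) (hIq : I ≤ q) :
    (∃ φ : (MvPolynomial (Fin n) k ⧸ I) → (MvPolynomial (Fin n) k ⧸ I),
      (∀ x y, φ (x + y) = φ x + φ y) ∧
      (∀ y z, φ (y ^ p ^ e * z) = y * φ z) ∧
      (∃ z, φ z ∉ q.map (Ideal.Quotient.mk I))) ↔
    ¬ (frobeniusPower I (p ^ e)).colon I ≤ frobeniusPower q (p ^ e) := by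
  constructor
  · rintro ⟨φ, hadd, hφ, z, hz⟩ hle
    obtain ⟨s, hs⟩ := exists_frobeniusTrace_mul_eq p e (AddMonoidHom.mk' φ hadd) hφ
    have hs_colon : s ∈ (frobeniusPower I (p ^ e)).colon I := by
      refine Submodule.mem_colon.2 fun g hg => (mem_frobeniusPower_iff p e).2 fun h => ?_
      rw [smul_eq_mul, mul_assoc, ← Ideal.Quotient.eq_zero_iff_mem, hs,
        Ideal.Quotient.eq_zero_iff_mem.2 (I.mul_mem_right h hg)]
      exact map_zero _
    obtain ⟨f, rfl⟩ := Ideal.Quotient.mk_surjective z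
    refine hz ?_
    rw [← AddMonoidHom.mk'_apply φ hadd, ← hs]
    exact Ideal.mem_map_of_mem _ ((mem_frobeniusPower_iff p e).1 (hle hs_colon) f)
  · intro hnle
    obtain ⟨s, hs_colon, hs_q⟩ := SetLike.not_le_iff_exists.1 hnle
    refine ⟨quotientFrobeniusTraceMul p e s hs_colon, map_add _, fun y z => ?_, ?_⟩
    · obtain ⟨g, rfl⟩ := Ideal.Quotient.mk_surjective y
      obtain ⟨f, rfl⟩ := Ideal.Quotient.mk_surjective z
      rw [← map_pow, ← map_mul, quotientFrobeniusTraceMul_mk, quotientFrobeniusTraceMul_mk,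
        mul_left_comm, frobeniusTrace_pow_mul, map_mul]
    · by_contra! h
      refine hs_q ((mem_frobeniusPower_iff p e).2 fun f => ?_)
      exact (Ideal.mem_quotient_iff_mem hIq).1 (h (Ideal.Quotient.mk I f))

/-- Fedder's Lemma: for `S = k[x_1,…,x_n]`, an ideal `I` and a prime `q ⊇ I`, with
`R = S/I`, there is a `p^{-e}`-linear map `φ : R → R` whose image is not contained
in the prime `π(q)` of `R` iff `(I^{[p^e]} : I) ⊄ q^{[p^e]}`. -/
theorem fedders_lemma {k : Type*} [Field k] [PerfectField k]
    (p : ℕ) [Fact p.Prime] [CharP k p] (n e : ℕ) (he : 1 ≤ e)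
    (I q : Ideal (MvPolynomial (Fin n) k)) [q.IsPrime] (hIq : I ≤ q) :
    (∃ φ : (MvPolynomial (Fin n) k ⧸ I) → (MvPolynomial (Fin n) k ⧸ I),
      (∀ x y, φ (x + y) = φ x + φ y) ∧
      (∀ y z, φ (y ^ p ^ e * z) = y * φ z) ∧
      (∃ z, φ z ∉ q.map (Ideal.Quotient.mk I))) ↔
    ¬ (frobeniusPower I (p ^ e)).colon I ≤ frobeniusPower q (p ^ e) :=
  fedders_lemma_general p n e I q hIq
end

section
/- Let R be a Noetherian commutative ring of prime characteristic p, let M be a finitely generated R-module, and let κ be a p^{-e}-linear map on M for some e ≥ 1. For every R-submodule N ⊆ M, the image κ(N) = {κ(x) : x ∈ N} is again an R-submodule of M, and the iterated images form a descending chain M ⊇ κ(M) ⊇ κ^2(M) ⊇ ⋯. This chain stabilizes: there exists n₀ such that κ^n(M) = κ^{n₀}(M) for all n ≥ n₀. Moreover, the stable image σ := κ^{n₀}(M) satisfies κ(σ) = σ, and every R-submodule N ⊆ M with κ(N) = N is contained in σ (σ is the largest submodule on which κ is surjective). -/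
/-!
The images `Nₙ = κⁿ(M)` are submodules, and their colon ideals `Iₙ = (Nₙ₊₁ : Nₙ)` increase,
because `r Nₙ ⊆ Nₙ₊₁` gives `r κ(Nₙ) = κ(r^q Nₙ) ⊆ κ(Nₙ₊₁)`; so they stabilise at some ideal `I`
from `n₀` on. Since `q = p^e ≥ 2`, we have `I κ(N) ⊆ κ(I^q N) ⊆ κ(I² N)`, and with
`I Nₙ₀ ⊆ Nₙ₀₊₁` this gives `I² Nₙ₀ ⊆ Nₙ` for all `n` by induction. If `I ≠ R`, localise at a
minimal prime `P` of `I`: the chain `(Nₙ)_P` lies between `I² W` and `W = (Nₙ₀)_P`, and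
`R_P / I² R_P` is Artinian, so the chain stabilises. Then some `Iₙ = I` is not contained in `P`,
a contradiction. Hence `I = R`, that is, `Nₙ₊₁ = Nₙ` for `n ≥ n₀`.
-/

theorem Submodule.exists_forall_ge_eq_of_antitone_of_smul_le {A X : Type*} [CommRing A]
    [AddCommGroup X] [Module A X] (J : Ideal A) [IsArtinianRing (A ⧸ J)]
    (D : ℕ → Submodule A X) (hD : Antitone D) (hfg : (D 0).FG) (hJ : ∀ n, J • D 0 ≤ D n) :
    ∃ n, ∀ m ≥ n, D m = D n := by
  have : Module.Finite A (D 0) := Module.Finite.iff_fg.mpr hfg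
  have : IsArtinian A ((D 0) ⧸ J • (⊤ : Submodule A (D 0))) :=
    isArtinian_of_surjective_algebraMap (R := A ⧸ J) Ideal.Quotient.mk_surjective
  have hle : ∀ n, J • ⊤ ≤ (D n).comap (D 0).subtype := fun n => by
    rw [← Submodule.map_le_iff_le_comap, Submodule.map_smul'', Submodule.map_subtype_top]
    exact hJ n
  obtain ⟨n, hn⟩ := IsArtinian.monotone_stabilizes (R := A)
    ⟨fun n => ((D n).comap (D 0).subtype).map (J • ⊤ : Submodule A (D 0)).mkQ,
      fun _ _ h => Submodule.map_mono (Submodule.comap_mono (hD h))⟩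
  refine ⟨n, fun m hm => ?_⟩
  have hmap : ((D n).comap (D 0).subtype).map (J • ⊤ : Submodule A (D 0)).mkQ =
      ((D m).comap (D 0).subtype).map (J • ⊤ : Submodule A (D 0)).mkQ := hn m hm
  have hcomap := congrArg (Submodule.comap (J • ⊤ : Submodule A (D 0)).mkQ) hmap
  rw [Submodule.comap_map_mkQ, Submodule.comap_map_mkQ, sup_eq_right.mpr (hle n),
    sup_eq_right.mpr (hle m)] at hcomap
  have hDW : ∀ k, D 0 ⊓ D k = D k := fun k => inf_eq_right.mpr (hD (Nat.zero_le k))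
  rw [← hDW m, ← Submodule.map_comap_subtype, ← hcomap, Submodule.map_comap_subtype, hDW]

theorem Submodule.exists_smul_mem_of_mem_localized' {R M S N : Type*} [CommRing R] [CommRing S]
    [AddCommGroup M] [AddCommGroup N] [Module R M] [Module R N] [Algebra R S] [Module S N]
    [IsScalarTower R S N] (p : Submonoid R) [IsLocalization p S] (f : M →ₗ[R] N)
    [IsLocalizedModule p f] (N' : Submodule R M) {x : M} (hx : f x ∈ N'.localized' S p f) :
    ∃ s ∈ p, s • x ∈ N' := by
  obtain ⟨m, hm, s, hms⟩ := hx
  rw [IsLocalizedModule.mk'_eq_iff, ← LinearMap.map_smul_of_tower] at hms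
  obtain ⟨c, hc⟩ := (IsLocalizedModule.eq_iff_exists p f).mp hms
  refine ⟨c * s, (c * s).2, ?_⟩
  have hcm := N'.smul_mem (c : R) hm
  rwa [← Submonoid.smul_def, hc, Submonoid.smul_def, Submonoid.smul_def, ← mul_smul] at hcm

theorem Submodule.colon_not_le_of_localized'_le {R M S N : Type*} [CommRing R] [CommRing S]
    [AddCommGroup M] [AddCommGroup N] [Module R M] [Module R N] [Algebra R S] [Module S N]
    [IsScalarTower R S N] (P : Ideal R) [P.IsPrime] [IsLocalization.AtPrime S P]
    (f : M →ₗ[R] N) [IsLocalizedModule P.primeCompl f] {N₁ N₂ : Submodule R M} (hN₁ : N₁.FG)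
    (h : N₁.localized' S P.primeCompl f ≤ N₂.localized' S P.primeCompl f) :
    ¬ N₂.colon N₁ ≤ P := by
  classical
  obtain ⟨G, rfl⟩ := hN₁
  have hG : ∀ g ∈ G, ∃ s ∉ P, s • g ∈ N₂ := fun g hg =>
    exists_smul_mem_of_mem_localized' (S := S) P.primeCompl f N₂ (h ⟨g, subset_span hg, 1, by simp⟩)
  choose! t ht_notMem ht_mem using hG
  intro hle
  have hprod : ∏ g ∈ G, t g ∈ N₂.colon (span R (G : Set M)) := by
    rw [colon_span, mem_colon]
    intro g hg
    rw [← Finset.mul_prod_erase G t hg, mul_comm, mul_smul]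
    exact N₂.smul_mem _ (ht_mem g hg)
  obtain ⟨g, hg, hgP⟩ := Ideal.IsPrime.prod_mem_iff.mp (hle hprod)
  exact ht_notMem g hg hgP

theorem Submodule.exists_colon_not_le_of_mem_minimalPrimes {R M : Type*} [CommRing R]
    [IsNoetherianRing R] [AddCommGroup M] [Module R M] [Module.Finite R M] {I P : Ideal R}
    (hP : P ∈ I.minimalPrimes) (N : ℕ → Submodule R M) (hN : Antitone N)
    (hI : ∀ n, I • N 0 ≤ N n) : ∃ n, ¬ (N (n + 1)).colon (N n) ≤ P := by
  have := hP.1.1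
  let Rₚ := Localization.AtPrime P
  let f := LocalizedModule.mkLinearMap P.primeCompl M
  let D n := (N n).localized' Rₚ P.primeCompl f
  let J := I.map (algebraMap R Rₚ)
  have : IsArtinianRing (Rₚ ⧸ J) := by
    refine IsLocalRing.quotient_artinian_of_mem_minimalPrimes_of_isLocalRing J ?_
    rw [IsLocalization.minimalPrimes_map P.primeCompl Rₚ I, Set.mem_preimage,
      Localization.AtPrime.under_maximalIdeal]
    exact hP
  have hD_mono := (Submodule.localized'gi Rₚ P.primeCompl f).gc.monotone_l
  have hJ : ∀ n, J • D 0 ≤ D n := fun n => by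
    simp only [J, D, ← Ideal.localized'_eq_map Rₚ P.primeCompl, ← Submodule.localized'_smul]
    exact hD_mono (hI n)
  obtain ⟨n, hn⟩ := Submodule.exists_forall_ge_eq_of_antitone_of_smul_le J D
    (fun _ _ h => hD_mono (hN h)) (Submodule.localized'_fg _ _ _ (IsNoetherian.noetherian _)) hJ
  exact ⟨n, Submodule.colon_not_le_of_localized'_le P f (IsNoetherian.noetherian _)
    (hn (n + 1) n.le_succ).ge⟩

namespace AddMonoidHom

variable {R M : Type*} [CommRing R] [AddCommGroup M] [Module R M] {q : ℕ} (κ : M →+ M)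
  (hκ : ∀ (r : R) (m : M), κ (r ^ q • m) = r • κ m)

def imageSubmodule (N : Submodule R M) : Submodule R M where
  toAddSubmonoid := N.toAddSubmonoid.map κ
  smul_mem' := by
    rintro r _ ⟨x, hx, rfl⟩
    exact ⟨r ^ q • x, N.smul_mem _ hx, hκ r x⟩

theorem coe_imageSubmodule (N : Submodule R M) : (κ.imageSubmodule hκ N : Set M) = κ '' N :=
  rfl

theorem imageSubmodule_mono : Monotone (κ.imageSubmodule hκ) := fun _ _ h => Set.image_mono h

theorem coe_iterate_imageSubmodule (n : ℕ) (N : Submodule R M) :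
    ((κ.imageSubmodule hκ)^[n] N : Set M) = κ^[n] '' N := by
  induction n with
  | zero => simp
  | succ n ih =>
    rw [Function.iterate_succ_apply', coe_imageSubmodule, ih, Function.iterate_succ',
      Set.image_comp]

theorem antitone_iterate_imageSubmodule_top : Antitone fun n => (κ.imageSubmodule hκ)^[n] ⊤ :=
  Monotone.antitone_iterate_of_map_le (κ.imageSubmodule_mono hκ) le_top

theorem smul_imageSubmodule_le {I J : Ideal R} (hIJ : ∀ r ∈ I, r ^ q ∈ J) (N : Submodule R M) :
    I • κ.imageSubmodule hκ N ≤ κ.imageSubmodule hκ (J • N) := by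
  refine Submodule.smul_le.mpr ?_
  rintro r hr _ ⟨x, hx, rfl⟩
  exact ⟨r ^ q • x, Submodule.smul_mem_smul (hIJ r hr) hx, hκ r x⟩

theorem colon_le_colon_imageSubmodule (hq : q ≠ 0) (N₁ N₂ : Submodule R M) :
    N₂.colon N₁ ≤ (κ.imageSubmodule hκ N₂).colon (κ.imageSubmodule hκ N₁) := by
  intro r hr
  rw [Submodule.mem_colon]
  rintro _ ⟨x, hx, rfl⟩
  exact ⟨r ^ q • x, Submodule.mem_colon.mp (Ideal.pow_mem_of_mem _ hr q hq.bot_lt) x hx, hκ r x⟩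

theorem sq_smul_le_iterate_imageSubmodule (hq : 2 ≤ q) {I : Ideal R} {N : Submodule R M}
    (hI : I • N ≤ κ.imageSubmodule hκ N) (n : ℕ) :
    I ^ 2 • N ≤ (κ.imageSubmodule hκ)^[n] N := by
  induction n with
  | zero => exact Submodule.smul_le_right
  | succ n ih =>
    rw [Function.iterate_succ_apply']
    calc I ^ 2 • N = I • I • N := by rw [sq, Submodule.mul_smul]
      _ ≤ I • κ.imageSubmodule hκ N := Submodule.smul_mono le_rfl hI
      _ ≤ κ.imageSubmodule hκ (I ^ 2 • N) := κ.smul_imageSubmodule_le hκ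
          (fun r hr => Ideal.pow_le_pow_right hq (Ideal.pow_mem_pow hr q)) N
      _ ≤ κ.imageSubmodule hκ ((κ.imageSubmodule hκ)^[n] N) := κ.imageSubmodule_mono hκ ih

theorem exists_iterate_imageSubmodule_top_le_succ [IsNoetherianRing R] [Module.Finite R M]
    (hq : 2 ≤ q) : ∃ n₀, ∀ n ≥ n₀,
      (κ.imageSubmodule hκ)^[n] ⊤ ≤ (κ.imageSubmodule hκ)^[n + 1] ⊤ := by
  let N : ℕ → Submodule R M := fun n => (κ.imageSubmodule hκ)^[n] ⊤
  let I : ℕ →o Ideal R := ⟨fun n => (N (n + 1)).colon (N n), monotone_nat_of_le_succ fun n => by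
    simp only [N, Function.iterate_succ_apply' _ (n + 1), Function.iterate_succ_apply' _ n]
    exact κ.colon_le_colon_imageSubmodule hκ (by omega) _ _⟩
  obtain ⟨n₀, hn₀⟩ := monotone_stabilizes_iff_noetherian.mpr inferInstance I
  refine ⟨n₀, fun n hn => (Submodule.colon_eq_top_iff_subset _).mp ?_⟩
  change I n = ⊤
  rw [← hn₀ n hn]
  by_contra hne
  obtain ⟨P, hP⟩ := Ideal.nonempty_minimalPrimes hne
  have hP2 : P ∈ (I n₀ ^ 2).minimalPrimes := by
    rwa [← Ideal.radical_minimalPrimes, Ideal.radical_pow _ two_ne_zero,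
      Ideal.radical_minimalPrimes]
  have hI : I n₀ • N n₀ ≤ κ.imageSubmodule hκ (N n₀) := by
    rw [← Function.iterate_succ_apply' (κ.imageSubmodule hκ)]
    exact Submodule.smul_le.mpr fun r hr x hx => Submodule.mem_colon.mp hr x hx
  obtain ⟨k, hk⟩ := Submodule.exists_colon_not_le_of_mem_minimalPrimes hP2 (fun k => N (n₀ + k))
    ((κ.antitone_iterate_imageSubmodule_top hκ).comp_monotone fun _ _ h => by omega) fun k => by
      simpa [N, add_comm n₀ k, Function.iterate_add_apply] using
        κ.sq_smul_le_iterate_imageSubmodule hκ hq hI k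
  exact hk ((hn₀ (n₀ + k) (by omega)).symm.le.trans hP.1.2)

theorem exists_iterate_imageSubmodule_top_eq [IsNoetherianRing R] [Module.Finite R M]
    (hq : 2 ≤ q) : ∃ n₀, ∀ n ≥ n₀,
      (κ.imageSubmodule hκ)^[n] ⊤ = (κ.imageSubmodule hκ)^[n₀] ⊤ := by
  obtain ⟨n₀, hn₀⟩ := κ.exists_iterate_imageSubmodule_top_le_succ hκ hq
  refine ⟨n₀, fun n hn => ?_⟩
  induction n, hn using Nat.le_induction with
  | base => rfl
  | succ n hn ih =>
    rw [← ih]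
    exact le_antisymm (κ.antitone_iterate_imageSubmodule_top hκ n.le_succ) (hn₀ n hn)

end AddMonoidHom

theorem iterated_images_stabilize_general {R : Type*} [CommRing R] [IsNoetherianRing R]
    {M : Type*} [AddCommGroup M] [Module R M] [Module.Finite R M]
    (p : ℕ) [Fact p.Prime] (e : ℕ) (he : 1 ≤ e)
    (κ : M → M)
    (hadd : ∀ x y : M, κ (x + y) = κ x + κ y)
    (hlin : ∀ (r : R) (m : M), κ (r ^ p ^ e • m) = r • κ m) :
    (∀ N : Submodule R M, ∃ N' : Submodule R M, (N' : Set M) = κ '' (N : Set M)) ∧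
    (∀ n : ℕ, κ^[n + 1] '' Set.univ ⊆ κ^[n] '' Set.univ) ∧
    ∃ n₀ : ℕ,
      (∀ n ≥ n₀, κ^[n] '' Set.univ = κ^[n₀] '' Set.univ) ∧
      κ '' (κ^[n₀] '' Set.univ) = κ^[n₀] '' Set.univ ∧
      ∀ N : Submodule R M, κ '' (N : Set M) = (N : Set M) →
        (N : Set M) ⊆ κ^[n₀] '' Set.univ := by
  let κ' : M →+ M := AddMonoidHom.mk' κ hadd
  have hq : 2 ≤ p ^ e := (Fact.out : p.Prime).two_le.trans (Nat.le_self_pow (by omega) p)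
  have himage (n : ℕ) : ((κ'.imageSubmodule hlin)^[n] ⊤ : Set M) = κ^[n] '' Set.univ :=
    κ'.coe_iterate_imageSubmodule hlin n ⊤
  obtain ⟨n₀, hn₀⟩ := κ'.exists_iterate_imageSubmodule_top_eq hlin hq
  refine ⟨fun N => ⟨κ'.imageSubmodule hlin N, rfl⟩, fun n => ?_, n₀, fun n hn => ?_, ?_,
    fun N hN => ?_⟩
  · rw [← himage, ← himage]
    exact κ'.antitone_iterate_imageSubmodule_top hlin n.le_succ
  · rw [← himage, ← himage, hn₀ n hn]
  · rw [← Set.image_comp, ← Function.iterate_succ', ← himage, ← himage, hn₀ (n₀ + 1) n₀.le_succ]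
  · calc (N : Set M) = κ^[n₀] '' N := by rw [Set.image_iterate_eq, Function.iterate_fixed hN]
      _ ⊆ κ^[n₀] '' Set.univ := Set.image_mono (Set.subset_univ _)

/-- For a `p^{-e}`-linear map `κ` on a finitely generated module `M` over a Noetherian
ring `R` of characteristic `p`: images of submodules are submodules, the iterated
images `κ^[n](M)` form a descending chain which stabilizes, and the stable image `σ`
satisfies `κ(σ) = σ` and contains every submodule on which `κ` is surjective. -/
theorem iterated_images_stabilize {R : Type*} [CommRing R] [IsNoetherianRing R]
    {M : Type*} [AddCommGroup M] [Module R M] [Module.Finite R M]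
    (p : ℕ) [Fact p.Prime] [CharP R p] (e : ℕ) (he : 1 ≤ e)
    (κ : M → M)
    (hadd : ∀ x y : M, κ (x + y) = κ x + κ y)
    (hlin : ∀ (r : R) (m : M), κ (r ^ p ^ e • m) = r • κ m) :
    (∀ N : Submodule R M, ∃ N' : Submodule R M, (N' : Set M) = κ '' (N : Set M)) ∧
    (∀ n : ℕ, κ^[n + 1] '' Set.univ ⊆ κ^[n] '' Set.univ) ∧
    ∃ n₀ : ℕ,
      (∀ n ≥ n₀, κ^[n] '' Set.univ = κ^[n₀] '' Set.univ) ∧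
      κ '' (κ^[n₀] '' Set.univ) = κ^[n₀] '' Set.univ ∧
      ∀ N : Submodule R M, κ '' (N : Set M) = (N : Set M) →
        (N : Set M) ⊆ κ^[n₀] '' Set.univ :=
  iterated_images_stabilize_general p e he κ hadd hlin
end

section
/- Let R be a commutative ring of prime characteristic p, let M be an R-module, and let κ be a p^{-e}-linear map on M for some e ≥ 1 that is surjective as a map of sets M → M. Then the annihilator Ann_R(M) = {r ∈ R : r • M = 0} is a radical ideal of R. -/
/-- If `κ` is a surjective `p^{-e}`-linear map on an `R`-module `M`, then the
annihilator of `M` is a radical ideal of `R`. -/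
theorem annihilator_isRadical_of_surjective {R : Type*} [CommRing R]
    {M : Type*} [AddCommGroup M] [Module R M]
    (p : ℕ) [Fact p.Prime] [CharP R p] (e : ℕ) (he : 1 ≤ e)
    (κ : M → M)
    (hadd : ∀ x y : M, κ (x + y) = κ x + κ y)
    (hlin : ∀ (r : R) (m : M), κ (r ^ p ^ e • m) = r • κ m)
    (hsurj : Function.Surjective κ) :
    (Module.annihilator R M).IsRadical := by
  have hp : 1 < p := (Fact.out : p.Prime).one_lt
  have hk : 1 < p ^ e := one_lt_pow₀ (by omega) (by omega)
  have hz : κ 0 = 0 := by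
    have := hadd 0 0
    simpa using this
  rw [Ideal.isRadical_iff_pow_one_lt (p ^ e) hk]
  intro r hr
  rw [Module.mem_annihilator] at hr ⊢
  intro m
  obtain ⟨m', rfl⟩ := hsurj m
  rw [← hlin, hr, hz]
end

section
/- Let k be a perfect field of characteristic p, let R be a finitely generated k-algebra, let M be a finitely generated R-module, and let κ be a p^{-e}-linear map on M for some e ≥ 1. If (N_i)_{i ∈ ℕ} is a descending chain of R-submodules of M (N_i ⊇ N_{i+1} for all i) such that κ maps each N_i onto itself (κ(N_i) = N_i as sets, for every i), then the chain is eventually constant: there exists i₀ such that N_i = N_{i₀} for all i ≥ i₀. -/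
/-!
Choose algebra generators `X` of `R` over `k` and module generators `G` of `M`, and let `F d` be
the `k`-span of the `X ^ a • g` with all exponents `a i ≤ d`: a finite-dimensional, exhaustive
filtration of `M`. Writing `X ^ a = (X ^ (a / q)) ^ q * X ^ (a % q)` with `q = p ^ e` shows that
`κ` maps `F d` into `F (d / q + C)` for a constant `C`. As `k` is perfect, every element of `R` is
a sum of terms `s ^ q * X ^ c` with all `c i < q`, so if a submodule `P` with `κ P = P` is
generated by `P ∩ F d`, it is also generated by `P ∩ F (d / 2 + C + 1)`. Iterating, every finitely
generated such `P` is generated by `P ∩ F (2 C + 2)`; the descending chain `N i ∩ F (2 C + 2)` in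
a finite-dimensional space stabilizes, and with it the chain `N i`.
-/

namespace CartierDescent

open Set Submodule
open scoped Pointwise

section Monomial

variable {R ι : Type*} [CommMonoid R] [Fintype ι]

def monomial (X : ι → R) (a : ι → ℕ) : R := ∏ i, X i ^ a i

theorem monomial_add (X : ι → R) (a b : ι → ℕ) :
    monomial X (a + b) = monomial X a * monomial X b := by
  simp only [monomial, Pi.add_apply, pow_add, Finset.prod_mul_distrib]

theorem monomial_eq_pow_mul (X : ι → R) (q : ℕ) (a : ι → ℕ) :
    monomial X a = monomial X (fun i => a i / q) ^ q * monomial X (fun i => a i % q) := by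
  simp only [monomial, ← Finset.prod_pow, ← Finset.prod_mul_distrib, ← pow_mul, ← pow_add,
    Nat.div_add_mod']

theorem closure_range_subset_range_monomial (X : ι → R) :
    (Submonoid.closure (range X) : Set R) ⊆ range (monomial X) := by
  intro x hx
  obtain ⟨a, rfl⟩ := Submonoid.mem_closure_range_iff.mp hx
  exact ⟨a, (Finsupp.prod_fintype a _ fun _ => pow_zero _).symm⟩

end Monomial

theorem span_range_monomial_eq_top {k R ι : Type*} [CommSemiring k] [CommSemiring R]
    [Algebra k R] [Fintype ι] {X : ι → R} (hX : Algebra.adjoin k (range X) = ⊤) :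
    span k (range (monomial X)) = ⊤ := by
  have hspan : span k (Submonoid.closure (range X) : Set R) = ⊤ := by
    rw [← Algebra.adjoin_eq_span, Algebra.toSubmodule_eq_top, hX]
  exact top_le_iff.mp (hspan ▸ span_mono (closure_range_subset_range_monomial X))

theorem mem_closure_pow_mul_monomial {k R ι : Type*} [CommSemiring k] [CommSemiring R]
    [Algebra k R] [Fintype ι] {q : ℕ} (hq : 0 < q) (hroot : ∀ a : k, ∃ b : k, b ^ q = a)
    {X : ι → R} (hX : Algebra.adjoin k (range X) = ⊤) (r : R) :
    r ∈ AddSubmonoid.closure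
      {y | ∃ s, ∃ w ∈ monomial X '' univ.pi (fun _ => Iio q), y = s ^ q * w} := by
  set D := {y | ∃ s, ∃ w ∈ monomial X '' univ.pi (fun _ => Iio q), y = s ^ q * w}
  have hsmul : (univ : Set k) • D ⊆ D := by
    rintro _ ⟨c, -, _, ⟨s, w, hw, rfl⟩, rfl⟩
    obtain ⟨b, rfl⟩ := hroot c
    refine ⟨algebraMap k R b * s, w, hw, ?_⟩
    simp only [Algebra.smul_def, mul_pow, map_pow, mul_assoc]
  have hmon : range (monomial X) ⊆ D := by
    rintro _ ⟨a, rfl⟩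
    exact ⟨_, _, ⟨_, fun i _ => Nat.mod_lt (a i) hq, rfl⟩, monomial_eq_pow_mul X q a⟩
  have hr : r ∈ span k D := span_mono hmon (by simp [span_range_monomial_eq_top hX])
  rw [← mem_toAddSubmonoid, span_eq_closure] at hr
  exact AddSubmonoid.closure_mono hsmul hr

theorem holds_of_halving_step {Q : ℕ → Prop} (hQ : Monotone Q) (C : ℕ)
    (hstep : ∀ d, Q d → Q (d / 2 + (C + 1))) (d : ℕ) (hd : Q d) : Q (2 * C + 2) := by
  induction d using Nat.strong_induction_on with
  | _ d ih =>
    by_cases h : d ≤ 2 * C + 2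
    · exact hQ h hd
    · exact ih _ (by omega) (hstep d hd)

section Filtration

variable {k R M ι : Type*} [CommSemiring k] [CommSemiring R] [AddCommMonoid M] [Module R M]
  [Module k M] [Fintype ι] {X : ι → R} {G : Set M}

variable (k) in
def filtration (X : ι → R) (G : Set M) (d : ℕ) : Submodule k M :=
  span k (image2 (fun a g => monomial X a • g) (univ.pi fun _ => Iic d) G)

theorem filtration_mono : Monotone (filtration k X G) := fun _ _ hd =>
  span_mono (image2_subset_right (pi_mono fun _ _ => Iic_subset_Iic.mpr hd))

theorem monomial_smul_mem_filtration [Algebra k R] [IsScalarTower k R M]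
    {a : ι → ℕ} {e d : ℕ} (ha : a ∈ univ.pi fun _ => Iic e)
    {m : M} (hm : m ∈ filtration k X G d) : monomial X a • m ∈ filtration k X G (d + e) := by
  induction hm using span_induction with
  | mem z hz =>
    obtain ⟨b, hb, g, hg, rfl⟩ := hz
    rw [smul_smul, ← monomial_add]
    refine subset_span (mem_image2_of_mem (fun i _ => ?_) hg)
    simpa [add_comm d e] using add_le_add (ha i trivial) (hb i trivial)
  | zero => rw [smul_zero]; exact zero_mem _
  | add x y _ _ hx hy => rw [smul_add]; exact add_mem hx hy
  | smul c x _ hx => rw [smul_comm]; exact smul_mem _ c hx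

theorem smul_mem_iSup_filtration [Algebra k R] [IsScalarTower k R M]
    (hX : Algebra.adjoin k (range X) = ⊤) (r : R) {m : M}
    (hm : m ∈ ⨆ d, filtration k X G d) : r • m ∈ ⨆ d, filtration k X G d := by
  obtain ⟨d, hd⟩ := (mem_iSup_of_directed _ filtration_mono.directed_le).mp hm
  have hr : r ∈ span k (range (monomial X)) := by simp [span_range_monomial_eq_top hX]
  induction hr using span_induction with
  | mem _ hu =>
    obtain ⟨a, rfl⟩ := hu
    exact mem_iSup_of_mem _ (monomial_smul_mem_filtration (e := ∑ i, a i)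
      (fun i _ => Finset.single_le_sum (fun j _ => Nat.zero_le (a j)) (Finset.mem_univ i)) hd)
  | zero => rw [zero_smul]; exact zero_mem _
  | add x y _ _ hx hy => rw [add_smul]; exact add_mem hx hy
  | smul c x _ hx => rw [smul_assoc]; exact smul_mem _ c hx

theorem iSup_filtration_eq_top [Algebra k R] [IsScalarTower k R M]
    (hX : Algebra.adjoin k (range X) = ⊤) (hG : span R G = ⊤) :
    ⨆ d, filtration k X G d = ⊤ := by
  let S : Submodule R M :=
    { (⨆ d, filtration k X G d).toAddSubmonoid with
      smul_mem' := fun r _ hm => smul_mem_iSup_filtration hX r hm }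
  have hGS : G ⊆ S := fun g hg =>
    have hg0 : monomial X 0 • g ∈ filtration k X G 0 :=
      subset_span (mem_image2_of_mem (fun _ _ => le_refl 0) hg)
    mem_iSup_of_mem 0 (by simpa [monomial] using hg0)
  have hS : S = ⊤ := top_le_iff.mp (hG ▸ span_le.mpr hGS)
  exact eq_top_iff.mpr fun m _ => (hS ▸ mem_top : m ∈ S)

theorem exists_subset_filtration [Algebra k R] [IsScalarTower k R M]
    (hX : Algebra.adjoin k (range X) = ⊤) (hG : span R G = ⊤)
    {t : Set M} (ht : t.Finite) : ∃ d, t ⊆ filtration k X G d := by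
  have hmem (m : M) : ∃ d, m ∈ filtration k X G d :=
    (mem_iSup_of_directed _ filtration_mono.directed_le).mp
      (iSup_filtration_eq_top hX hG ▸ mem_top)
  choose deg hdeg using hmem
  obtain ⟨d, hd⟩ := (ht.image deg).bddAbove
  exact ⟨d, fun m hm => filtration_mono (hd (mem_image_of_mem deg hm)) (hdeg m)⟩

theorem finite_filtration (hG : G.Finite) (d : ℕ) : Module.Finite k (filtration k X G d) :=
  Module.Finite.span_of_finite k ((Finite.pi fun _ => finite_Iic d).image2 _ hG)

end Filtration

section Semilinear

variable {k R M ι : Type*} [CommSemiring k] [CommSemiring R] [Algebra k R] [AddCommMonoid M]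
  [Module R M] [Module k M] [IsScalarTower k R M] {q : ℕ} {κ : M →+ M}

theorem map_mem_span_image (hκ : ∀ (r : R) (m : M), κ (r ^ q • m) = r • κ m)
    (hroot : ∀ a : k, ∃ b : k, b ^ q = a) {S : Set M} {x : M} (hx : x ∈ span k S) :
    κ x ∈ span k (κ '' S) := by
  induction hx using span_induction with
  | mem y hy => exact subset_span (mem_image_of_mem κ hy)
  | zero => rw [map_zero]; exact zero_mem _
  | add y z _ _ hy hz => rw [map_add]; exact add_mem hy hz
  | smul c y _ hy =>
    obtain ⟨b, rfl⟩ := hroot c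
    rw [← algebraMap_smul R, map_pow, hκ, algebraMap_smul]
    exact smul_mem _ b hy

theorem map_mem_span_smul (hκ : ∀ (r : R) (m : M), κ (r ^ q • m) = r • κ m) {W : Set R}
    (hW : ∀ r : R, r ∈ AddSubmonoid.closure {y | ∃ s, ∃ w ∈ W, y = s ^ q * w})
    {T : Set M} {y : M} (hy : y ∈ span R T) : κ y ∈ span R (κ '' (W • T)) := by
  rw [← mem_toAddSubmonoid, span_eq_closure] at hy
  induction hy using AddSubmonoid.closure_induction with
  | mem _ h =>
    obtain ⟨r, -, t, ht, rfl⟩ := h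
    induction hW r using AddSubmonoid.closure_induction with
    | mem _ hr =>
      obtain ⟨s, w, hw, rfl⟩ := hr
      beta_reduce
      rw [mul_smul, hκ]
      exact smul_mem _ s (subset_span (mem_image_of_mem κ (smul_mem_smul hw ht)))
    | zero => beta_reduce; rw [zero_smul, map_zero]; exact zero_mem _
    | add _ _ _ _ h₁ h₂ => beta_reduce at *; rw [add_smul, map_add]; exact add_mem h₁ h₂
  | zero => rw [map_zero]; exact zero_mem _
  | add _ _ _ _ h₁ h₂ => rw [map_add]; exact add_mem h₁ h₂

variable [Fintype ι] {X : ι → R} {G : Set M}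

theorem exists_map_filtration_le (hκ : ∀ (r : R) (m : M), κ (r ^ q • m) = r • κ m)
    (hq : 0 < q) (hroot : ∀ a : k, ∃ b : k, b ^ q = a) (hX : Algebra.adjoin k (range X) = ⊤)
    (hG : span R G = ⊤) (hGfin : G.Finite) :
    ∃ C, ∀ d, ∀ x ∈ filtration k X G d, κ x ∈ filtration k X G (d / q + C) := by
  obtain ⟨C, hC⟩ := exists_subset_filtration hX hG
    (((Finite.pi fun _ => finite_Iio q).image2 (fun c g => monomial X c • g) hGfin).image κ)
  refine ⟨C, fun d x hx => span_le.mpr ?_ (map_mem_span_image hκ hroot hx)⟩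
  rintro _ ⟨_, ⟨a, ha, g, hg, rfl⟩, rfl⟩
  beta_reduce
  rw [monomial_eq_pow_mul X q a, mul_smul, hκ, add_comm]
  exact monomial_smul_mem_filtration (fun i _ => Nat.div_le_div_right (ha i trivial))
    (hC ⟨_, mem_image2_of_mem (fun i _ => Nat.mod_lt (a i) hq) hg, rfl⟩)

theorem le_span_inter_filtration_half (hκ : ∀ (r : R) (m : M), κ (r ^ q • m) = r • κ m)
    (hq : 2 ≤ q) (hR : ∀ r : R, r ∈ AddSubmonoid.closure
      {y | ∃ s, ∃ w ∈ monomial X '' univ.pi (fun _ => Iio q), y = s ^ q * w})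
    {C : ℕ} (hC : ∀ d, ∀ x ∈ filtration k X G d, κ x ∈ filtration k X G (d / q + C))
    {P : Submodule R M} (hP : κ '' P = P) {d : ℕ} (hd : P ≤ span R (filtration k X G d ∩ P)) :
    P ≤ span R (filtration k X G (d / 2 + (C + 1)) ∩ P) := by
  have hdeg : (d + (q - 1)) / q + C ≤ d / 2 + (C + 1) := by
    have h₁ : (d + (q - 1)) / q ≤ (d + q) / q := Nat.div_le_div_right (by omega)
    have h₂ : d / q ≤ d / 2 := Nat.div_le_div_left hq two_pos
    rw [Nat.add_div_right d (by omega)] at h₁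
    omega
  intro x hx
  obtain ⟨y, hy, rfl⟩ : x ∈ κ '' P := by rwa [hP]
  refine span_mono ?_ (map_mem_span_smul hκ hR (hd hy))
  rintro _ ⟨_, ⟨_, ⟨c, hc, rfl⟩, t, ⟨htF, htP⟩, rfl⟩, rfl⟩
  have hcF := monomial_smul_mem_filtration (e := q - 1)
    (fun i _ => Nat.le_sub_one_of_lt (hc i trivial)) htF
  exact ⟨filtration_mono hdeg (hC _ _ hcF), hP ▸ mem_image_of_mem κ (P.smul_mem _ htP)⟩

theorem eq_span_inter_filtration (hκ : ∀ (r : R) (m : M), κ (r ^ q • m) = r • κ m)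
    (hq : 2 ≤ q) (hroot : ∀ a : k, ∃ b : k, b ^ q = a) (hX : Algebra.adjoin k (range X) = ⊤)
    (hG : span R G = ⊤) {C : ℕ}
    (hC : ∀ d, ∀ x ∈ filtration k X G d, κ x ∈ filtration k X G (d / q + C))
    {P : Submodule R M} (hP : κ '' P = P) (hfg : P.FG) :
    P = span R (filtration k X G (2 * C + 2) ∩ P) := by
  obtain ⟨s, hs⟩ := hfg
  obtain ⟨d, hd⟩ := exists_subset_filtration hX hG s.finite_toSet
  have hgen : P ≤ span R ((filtration k X G d : Set M) ∩ P) := by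
    rw [← hs]
    exact span_mono (subset_inter hd subset_span)
  have hmono : Monotone fun d => P ≤ span R ((filtration k X G d : Set M) ∩ P) := by
    intro d d' h hle
    exact hle.trans (span_mono (inter_subset_inter_left _ (filtration_mono h)))
  refine le_antisymm ?_ (span_le.mpr inter_subset_right)
  exact holds_of_halving_step hmono C (fun d => le_span_inter_filtration_half hκ hq
    (mem_closure_pow_mul_monomial (by omega) hroot hX) hC hP) d hgen

end Semilinear

theorem exists_eq_of_antitone {k R M ι : Type*} [Field k] [CommSemiring R] [Algebra k R]
    [AddCommGroup M] [Module R M] [Module k M] [IsScalarTower k R M] [Fintype ι] {q : ℕ}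
    {κ : M →+ M} (hκ : ∀ (r : R) (m : M), κ (r ^ q • m) = r • κ m) (hq : 2 ≤ q)
    (hroot : ∀ a : k, ∃ b : k, b ^ q = a) {X : ι → R} (hX : Algebra.adjoin k (range X) = ⊤)
    {G : Set M} (hG : span R G = ⊤) (hGfin : G.Finite) {N : ℕ → Submodule R M}
    (hN : Antitone N) (hsurj : ∀ i, κ '' N i = N i) (hfg : ∀ i, (N i).FG) :
    ∃ i₀, ∀ i ≥ i₀, N i = N i₀ := by
  obtain ⟨C, hC⟩ := exists_map_filtration_le hκ (by omega) hroot hX hG hGfin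
  set F := filtration k X G (2 * C + 2)
  have : Module.Finite k F := finite_filtration hGfin _
  let slice (i : ℕ) : Submodule k F := comap F.subtype ((N i).restrictScalars k)
  have hslice (i : ℕ) : N i = span R (map F.subtype (slice i)) := by
    rw [map_comap_subtype, coe_inf, coe_restrictScalars]
    exact eq_span_inter_filtration hκ hq hroot hX hG hC (hsurj i) (hfg i)
  obtain ⟨i₀, hi₀⟩ := IsArtinian.monotone_stabilizes
    ⟨fun i => OrderDual.toDual (slice i), fun _ _ h => comap_mono (hN h)⟩
  refine ⟨i₀, fun i hi => ?_⟩
  have hstable : slice i₀ = slice i := hi₀ i hi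
  rw [hslice i, hslice i₀, hstable]

end CartierDescent

/-- Descending chains of submodules onto which a `p^{-e}`-linear map `κ` surjects are
eventually constant, for a finitely generated module over a finitely generated algebra
over a perfect field of characteristic `p`. -/
theorem descending_chain_condition_cartier {k : Type*} [Field k] [PerfectField k]
    (p : ℕ) [Fact p.Prime] [CharP k p]
    {R : Type*} [CommRing R] [Algebra k R] [Algebra.FiniteType k R]
    {M : Type*} [AddCommGroup M] [Module R M] [Module.Finite R M]
    (e : ℕ) (he : 1 ≤ e)
    (κ : M → M)
    (hadd : ∀ x y : M, κ (x + y) = κ x + κ y)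
    (hlin : ∀ (r : R) (m : M), κ (r ^ p ^ e • m) = r • κ m)
    (N : ℕ → Submodule R M)
    (hdesc : ∀ i, N (i + 1) ≤ N i)
    (hsurj : ∀ i, κ '' (N i : Set M) = (N i : Set M)) :
    ∃ i₀, ∀ i ≥ i₀, N i = N i₀ := by
  let : Module k M := Module.compHom M (algebraMap k R)
  have : IsScalarTower k R M := IsScalarTower.of_algebraMap_smul fun _ _ => rfl
  have : IsNoetherianRing R := Algebra.FiniteType.isNoetherianRing k R
  obtain ⟨s, hs⟩ := Algebra.FiniteType.out (R := k) (A := R)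
  obtain ⟨G, hG⟩ := Module.Finite.fg_top (R := R) (M := M)
  have hq : 2 ≤ p ^ e := (Fact.out : p.Prime).two_le.trans (Nat.le_self_pow (by omega) p)
  have hroot : ∀ a : k, ∃ b : k, b ^ p ^ e = a :=
    (PerfectRing.bijective_frobenius (R := k) (p := p ^ e)).2
  exact CartierDescent.exists_eq_of_antitone (κ := AddMonoidHom.mk' κ hadd) hlin hq hroot
    (X := ((↑) : s → R)) (by simpa using hs) hG G.finite_toSet (antitone_nat_of_succ_le hdesc)
    hsurj fun i => IsNoetherian.noetherian (N i)
end

section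
/- Gauge bound for p^{-e}-linear maps. Let k be a perfect field of characteristic p, let S = k[x_1,…,x_n], let M be a finitely generated S-module with a fixed finite generating family m_1,…,m_k, and let κ be a p^{-e}-linear map on M for some e ≥ 1. Then there exists a constant K ∈ ℕ such that for all d ∈ ℕ and all m ∈ M_d: (1) κ(m) ∈ M_{⌊(d+K)/p^e⌋}; and (2) for every ν ≥ 1, κ^ν(m) ∈ M_{⌊d/p^{νe}⌋ + K}, where κ^ν denotes the ν-fold composite of κ and ⌊·⌋ is integer floor. -/
/-- `boxSpan k n d` is the `k`-subspace of `k[x_1,…,x_n]` spanned by monomials whose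
exponent in each variable is at most `d`. -/
def boxSpan (k : Type*) [CommSemiring k] (n d : ℕ) : Set (MvPolynomial (Fin n) k) :=
  {f | ∀ m ∈ f.support, ∀ j : Fin n, m j ≤ d}

/-- `gaugeLE k n gen d` is the set of elements of `M` expressible as combinations of
the fixed generators `gen` with coefficients in `boxSpan k n d`; i.e. the elements of
gauge at most `d`. -/
def gaugeLE (k : Type*) [CommSemiring k] (n : ℕ) {M : Type*} [AddCommMonoid M]
    [Module (MvPolynomial (Fin n) k) M] {t : ℕ} (gen : Fin t → M) (d : ℕ) : Set M :=
  {x | ∃ f : Fin t → MvPolynomial (Fin n) k,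
    (∀ i, f i ∈ boxSpan k n d) ∧ x = ∑ i, f i • gen i}

/-! Put `q = p ^ e`. Over a perfect field every coefficient is a `q`-th power, so splitting each
exponent as `β = q ⌊β / q⌋ + (β mod q)` gives `c x^β = (c^{1/q} x^{⌊β/q⌋})^q x^{β mod q}` and hence
`κ (c x^β mᵢ) = c^{1/q} x^{⌊β/q⌋} κ (x^{β mod q} mᵢ)`. The finitely many `κ (x^α mᵢ)` with `α < q`
lie in a common `M_C`, so `κ` maps `M_d` into `M_{⌊d/q⌋ + C}`. Iterating, the error term stays
at most `q C`, because `⌊(a + q C) / q⌋ + C = ⌊a / q⌋ + 2 C ≤ ⌊a / q⌋ + q C` when `q ≥ 2`. -/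

open MvPolynomial

lemma monomial_pow_eq_pow_mul_monomial {R σ : Type*} [CommSemiring R] (q : ℕ) (β : σ →₀ ℕ)
    (b : R) :
    monomial β (b ^ q) = monomial (β.mapRange (· / q) (Nat.zero_div q)) b ^ q
      * monomial (β.mapRange (· % q) (Nat.zero_mod q)) 1 := by
  have hβ :
      q • β.mapRange (· / q) (Nat.zero_div q) + β.mapRange (· % q) (Nat.zero_mod q) = β := by
    ext j
    simp [Nat.div_add_mod]
  rw [monomial_pow, monomial_mul, mul_one, hβ]

lemma iterate_mapsTo_div_add {α : Type*} {G : ℕ → Set α} (hG : Monotone G) {f : α → α}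
    {q C : ℕ} (hq : 2 ≤ q) (hf : ∀ d, Set.MapsTo f (G d) (G (d / q + C))) (ν d : ℕ) :
    Set.MapsTo f^[ν] (G d) (G (d / q ^ ν + q * C)) := by
  induction ν with
  | zero => exact fun x hx => hG (by simp) hx
  | succ ν ih =>
    rw [Function.iterate_succ']
    refine ((hf _).comp ih).mono_right (hG ?_)
    rw [Nat.add_mul_div_left _ _ (by omega), Nat.div_div_eq_div_mul, ← pow_succ]
    nlinarith

section Filtration

variable {k : Type*} [CommSemiring k] {n : ℕ}

lemma boxSpan_mono {d d' : ℕ} (h : d ≤ d') : boxSpan k n d ⊆ boxSpan k n d' :=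
  fun _ hf m hm j => (hf m hm j).trans h

lemma mul_mem_boxSpan {a b : ℕ} {f g : MvPolynomial (Fin n) k}
    (hf : f ∈ boxSpan k n a) (hg : g ∈ boxSpan k n b) : f * g ∈ boxSpan k n (a + b) := by
  classical
  intro m hm j
  obtain ⟨m₁, hm₁, m₂, hm₂, rfl⟩ := Finset.mem_add.1 (support_mul f g hm)
  exact add_le_add (hf m₁ hm₁ j) (hg m₂ hm₂ j)

lemma monomial_mem_boxSpan {d : ℕ} {β : Fin n →₀ ℕ} (c : k) (h : ∀ j, β j ≤ d) :
    monomial β c ∈ boxSpan k n d := by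
  classical
  intro m hm
  rw [Finset.mem_singleton.1 (support_monomial_subset hm)]
  exact h

lemma mem_boxSpan_totalDegree (f : MvPolynomial (Fin n) k) : f ∈ boxSpan k n f.totalDegree :=
  fun m hm j => (m.le_degree j).trans (le_totalDegree hm)

variable {M : Type*} [AddCommMonoid M] [Module (MvPolynomial (Fin n) k) M]
  {t : ℕ} {gen : Fin t → M}

lemma gaugeLE_mono : Monotone (gaugeLE k n gen) := by
  rintro d d' h x ⟨f, hf, rfl⟩
  exact ⟨f, fun i => boxSpan_mono h (hf i), rfl⟩

variable (k n gen) in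
def gaugeAddSubmonoid (d : ℕ) : AddSubmonoid M where
  carrier := gaugeLE k n gen d
  zero_mem' := ⟨0, fun _ m hm => by simp at hm, by simp⟩
  add_mem' := by
    rintro _ _ ⟨f, hf, rfl⟩ ⟨g, hg, rfl⟩
    refine ⟨f + g, fun i m hm j => ?_, by simp [add_smul, Finset.sum_add_distrib]⟩
    rcases Finset.mem_union.1 (support_add hm) with h | h
    exacts [hf i m h j, hg i m h j]

lemma smul_mem_gaugeLE {a b : ℕ} {f : MvPolynomial (Fin n) k} {x : M}
    (hf : f ∈ boxSpan k n a) (hx : x ∈ gaugeLE k n gen b) :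
    f • x ∈ gaugeLE k n gen (a + b) := by
  obtain ⟨g, hg, rfl⟩ := hx
  exact ⟨fun i => f * g i, fun i => mul_mem_boxSpan hf (hg i),
    by simp [Finset.smul_sum, smul_smul]⟩

lemma exists_mem_gaugeLE (hgen : Submodule.span (MvPolynomial (Fin n) k) (Set.range gen) = ⊤)
    (x : M) : ∃ d, x ∈ gaugeLE k n gen d := by
  obtain ⟨c, hc⟩ :=
    (Submodule.mem_span_range_iff_exists_fun _).1 (hgen ▸ Submodule.mem_top (x := x))
  obtain ⟨d, hd⟩ := Finset.exists_le (Finset.univ.image fun i => (c i).totalDegree)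
  exact ⟨d, c, fun i => boxSpan_mono (hd _ (Finset.mem_image_of_mem _ (Finset.mem_univ i)))
    (mem_boxSpan_totalDegree (c i)), hc.symm⟩

lemma exists_forall_mem_gaugeLE
    (hgen : Submodule.span (MvPolynomial (Fin n) k) (Set.range gen) = ⊤)
    {ι : Type*} (s : Finset ι) (x : ι → M) : ∃ C, ∀ i ∈ s, x i ∈ gaugeLE k n gen C := by
  choose D hD using fun i => exists_mem_gaugeLE hgen (x i)
  obtain ⟨C, hC⟩ := Finset.exists_le (s.image D)
  exact ⟨C, fun i hi => gaugeLE_mono (hC _ (Finset.mem_image_of_mem D hi)) (hD i)⟩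

lemma mapsTo_gaugeLE_of_monomial_smul {N : Type*} [AddCommMonoid N] (φ : M →+ N)
    (S : AddSubmonoid N) {d : ℕ}
    (h : ∀ i (β : Fin n →₀ ℕ) (c : k), (∀ j, β j ≤ d) → φ (monomial β c • gen i) ∈ S) :
    Set.MapsTo φ (gaugeLE k n gen d) S := by
  rintro _ ⟨f, hf, rfl⟩
  rw [map_sum]
  refine S.sum_mem fun i _ => ?_
  rw [(f i).as_sum, Finset.sum_smul, map_sum]
  exact S.sum_mem fun β hβ => h i β _ (hf i β hβ)

theorem exists_mapsTo_gaugeLE_div_add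
    (hgen : Submodule.span (MvPolynomial (Fin n) k) (Set.range gen) = ⊤)
    {q : ℕ} (hq : 0 < q) (hroot : ∀ c : k, ∃ b, b ^ q = c) (κ : M →+ M)
    (hκ : ∀ (r : MvPolynomial (Fin n) k) (m : M), κ (r ^ q • m) = r • κ m) :
    ∃ C, ∀ d, Set.MapsTo κ (gaugeLE k n gen d) (gaugeLE k n gen (d / q + C)) := by
  obtain ⟨C, hC⟩ := exists_forall_mem_gaugeLE hgen
    (Finset.univ ×ˢ Finset.Iic (Finsupp.equivFunOnFinite.symm fun _ => q))
    fun iα : Fin t × (Fin n →₀ ℕ) => κ (monomial iα.2 (1 : k) • gen iα.1)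
  refine ⟨C, fun d => mapsTo_gaugeLE_of_monomial_smul κ (gaugeAddSubmonoid k n gen _)
    fun i β c hβ => ?_⟩
  obtain ⟨b, rfl⟩ := hroot c
  rw [monomial_pow_eq_pow_mul_monomial, mul_smul, hκ]
  refine smul_mem_gaugeLE (monomial_mem_boxSpan b fun j => Nat.div_le_div_right (hβ j))
    (hC (i, _) ?_)
  simp [Finsupp.le_def, (Nat.mod_lt _ hq).le]

end Filtration

/-- Gauge bound for `p^{-e}`-linear maps: for a finitely generated module `M` over
`S = k[x_1,…,x_n]` with fixed generators, and `κ` a `p^{-e}`-linear map on `M`, there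
is a constant `K` such that elements of gauge `≤ d` are sent by `κ` into gauge
`≤ ⌊(d + K)/p^e⌋`, and by `κ^ν` into gauge `≤ ⌊d/p^{νe}⌋ + K`. -/
theorem gauge_bound {k : Type*} [Field k] [PerfectField k]
    (p : ℕ) [Fact p.Prime] [CharP k p] {n : ℕ}
    {M : Type*} [AddCommGroup M] [Module (MvPolynomial (Fin n) k) M]
    {t : ℕ} (gen : Fin t → M)
    (hgen : Submodule.span (MvPolynomial (Fin n) k) (Set.range gen) = ⊤)
    (e : ℕ) (he : 1 ≤ e)
    (κ : M → M)
    (hadd : ∀ x y : M, κ (x + y) = κ x + κ y)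
    (hlin : ∀ (r : MvPolynomial (Fin n) k) (m : M), κ (r ^ p ^ e • m) = r • κ m) :
    ∃ K : ℕ, ∀ d : ℕ, ∀ m ∈ gaugeLE k n gen d,
      κ m ∈ gaugeLE k n gen ((d + K) / p ^ e) ∧
      ∀ ν : ℕ, 1 ≤ ν → κ^[ν] m ∈ gaugeLE k n gen (d / p ^ (ν * e) + K) := by
  have hq : 2 ≤ p ^ e :=
    (Fact.out : p.Prime).two_le.trans (Nat.le_self_pow (by omega) p)
  obtain ⟨C, hC⟩ := exists_mapsTo_gaugeLE_div_add hgen (by omega)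
    (bijective_iterateFrobenius k p e).surjective (AddMonoidHom.mk' κ hadd) hlin
  refine ⟨p ^ e * C, fun d m hm => ⟨?_, fun ν _ => ?_⟩⟩
  · rw [Nat.add_mul_div_left _ _ (by omega)]
    exact hC d hm
  · rw [pow_mul']
    exact iterate_mapsTo_div_add gaugeLE_mono hq hC ν d hm
end

section
/- Let R be an integral domain of prime characteristic p that admits an e-iterated Frobenius splitting for some e ≥ 1, let K be the fraction field of R, and let ι : R → K be the canonical embedding. If x ∈ K satisfies x^p ∈ ι(R), then x ∈ ι(R) (R is weakly normal). -/
/-!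
Write `x = b / c` and `q = p ^ e`. Since `e ≥ 1`, `a := x ^ q = (x ^ p) ^ p ^ (e - 1)` lies in `R` as well, so
`b ^ q = c ^ q * a` in `R`. Applying the splitting `φ`, which is `q`-th-power-semilinear with
`φ 1 = 1`, gives `b = φ (b ^ q) = c * φ a`, hence `x = φ a ∈ R`.
-/

theorem eq_mul_apply_of_pow_eq_pow_mul {R : Type*} [Monoid R] {q : ℕ} {φ : R → R}
    (hmul : ∀ r x : R, φ (r ^ q * x) = r * φ x) (hone : φ 1 = 1) {a b c : R}
    (h : b ^ q = c ^ q * a) : b = c * φ a :=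
  calc b = b * φ 1 := by rw [hone, mul_one]
    _ = φ (b ^ q * 1) := (hmul b 1).symm
    _ = c * φ a := by rw [mul_one, h, hmul]

theorem mem_range_algebraMap_of_pow_mem {R K : Type*} [CommRing R] [CommRing K] [Algebra R K]
    [IsFractionRing R K] {q : ℕ} {φ : R → R}
    (hmul : ∀ r x : R, φ (r ^ q * x) = r * φ x) (hone : φ 1 = 1) {x : K}
    (hx : x ^ q ∈ Set.range (algebraMap R K)) : x ∈ Set.range (algebraMap R K) := by
  obtain ⟨a, ha⟩ := hx
  obtain ⟨⟨b, c⟩, rfl⟩ := IsLocalization.mk'_surjective (nonZeroDivisors R) x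
  have hpow : b ^ q = c ^ q * a := IsFractionRing.injective R K <| by
    rw [map_pow, map_mul, map_pow, ha, ← IsLocalization.mk'_spec K b c, mul_pow, mul_comm]
  refine ⟨φ a, ?_⟩
  rw [eq_mul_apply_of_pow_eq_pow_mul hmul hone hpow]
  exact (IsLocalization.mk'_mul_cancel_left (φ a) c).symm

theorem weaklyNormal_of_frobSplitting_general {R : Type*} [CommRing R]
    (p : ℕ) (e : ℕ) (he : 1 ≤ e)
    (φ : R → R) (hφ : IsFrobSplitting p e φ)
    (x : FractionRing R)
    (hx : x ^ p ∈ Set.range (algebraMap R (FractionRing R))) :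
    x ∈ Set.range (algebraMap R (FractionRing R)) := by
  obtain ⟨-, hmul, hone⟩ := hφ
  refine mem_range_algebraMap_of_pow_mem hmul hone ?_
  obtain ⟨a, ha⟩ := hx
  refine ⟨a ^ p ^ (e - 1), ?_⟩
  rw [map_pow, ha, ← pow_mul, ← pow_succ', Nat.sub_add_cancel he]

/-- A Frobenius split domain `R` of characteristic `p` is weakly normal: if an element
`x` of the fraction field satisfies `x^p ∈ R`, then `x ∈ R`. -/
theorem weaklyNormal_of_frobSplitting {R : Type*} [CommRing R] [IsDomain R]
    (p : ℕ) [Fact p.Prime] [CharP R p] (e : ℕ) (he : 1 ≤ e)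
    (φ : R → R) (hφ : IsFrobSplitting p e φ)
    (x : FractionRing R)
    (hx : x ^ p ∈ Set.range (algebraMap R (FractionRing R))) :
    x ∈ Set.range (algebraMap R (FractionRing R)) :=
  weaklyNormal_of_frobSplitting_general p e he φ hφ x hx
end
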